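/- arXiv:2506.04007 — 7 statements merged into one kernel-verified Lean document; each statement's English description precedes it below -/
import Mathlib

section
/- Let G be a finite group and H a subgroup. The number of double cosets HgH in H\G/H that are equal to their inverse coset Hg⁻¹H equals (1/|H|) · Σ_{h∈H} |{g ∈ G : g² = h}|. -/
open Finset

open scoped Classical

section SelfInvAux

variable {G : Type*} [Group G] [Fintype G] (H : Subgroup G)

/-- Core counting lemma: a self-inverse double coset `HgH` contains exactly `|H|`
elements `x` with `x ^ 2 ∈ H`. -/
lemma selfinv_doset_card (g : G)
    (hg : DoubleCoset.doubleCoset g (H : Set G) (H : Set G) = DoubleCoset.doubleCoset g⁻¹ (H : Set G) (H : Set G)) :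
    (univ.filter fun x : G => x ∈ DoubleCoset.doubleCoset g (H : Set G) (H : Set G) ∧ x ^ 2 ∈ H).card
      = Nat.card H := by
  classical
  set P : Finset (G × G) :=
    univ.filter (fun p : G × G => p.1 ∈ H ∧ p.2 ∈ H ∧ g * (p.2 * p.1) * g ∈ H) with hP
  set T : Finset G :=
    univ.filter (fun x : G => x ∈ DoubleCoset.doubleCoset g (H : Set G) (H : Set G) ∧ x ^ 2 ∈ H) with hT
  set K : Finset G := univ.filter (fun u : G => u ∈ H ∧ g⁻¹ * u * g ∈ H) with hK
  set C : Finset G := univ.filter (fun c : G => c ∈ H ∧ g * c * g ∈ H) with hC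
  set HF : Finset G := univ.filter (fun a : G => a ∈ H) with hHF
  have hHFcard : HF.card = Nat.card H := by
    rw [Nat.card_eq_fintype_card, hHF]
    exact (Fintype.card_subtype _).symm
  -- Count 1 : P.card = T.card * K.card
  have count1 : P.card = T.card * K.card := by
    have hmaps : ∀ p ∈ P, p.1 * g * p.2 ∈ T := by
      rintro ⟨a, b⟩ hp
      simp only [hP, mem_filter, mem_univ, true_and] at hp
      obtain ⟨ha, hb, hgba⟩ := hp
      simp only [hT, mem_filter, mem_univ, true_and]
      refine ⟨DoubleCoset.mem_doubleCoset.2 ⟨a, ha, b, hb, rfl⟩, ?_⟩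
      have : (a * g * b) ^ 2 = a * (g * (b * a) * g) * b := by rw [pow_two]; group
      rw [this]
      exact H.mul_mem (H.mul_mem ha hgba) hb
    rw [card_eq_sum_card_fiberwise hmaps]
    rw [Finset.sum_congr rfl (fun x hx => ?_), Finset.sum_const, smul_eq_mul]
    -- fiber over x has card K.card
    simp only [hT, mem_filter, mem_univ, true_and] at hx
    obtain ⟨hxd, hx2⟩ := hx
    obtain ⟨α, hα, β, hβ, hxe⟩ := DoubleCoset.mem_doubleCoset.1 hxd
    -- hxe : x = α * g * β
    refine Finset.card_nbij' (fun p => α⁻¹ * p.1)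
      (fun u => (α * u, g⁻¹ * u⁻¹ * g * β)) ?_ ?_ ?_ ?_
    · rintro ⟨a, b⟩ hp
      simp only [mem_coe, hP, mem_filter, mem_univ, true_and] at hp
      obtain ⟨⟨ha, hb, _⟩, hpe⟩ := hp
      simp only [mem_coe, hK, mem_filter, mem_univ, true_and]
      refine ⟨H.mul_mem (H.inv_mem hα) ha, ?_⟩
      have ha1 : a = α * g * β * b⁻¹ * g⁻¹ := by
        refine mul_right_cancel (b := g * b) ?_
        rw [show a * (g * b) = a * g * b from by group, hpe, ← hxe]
        group
      have : g⁻¹ * (α⁻¹ * a) * g = β * b⁻¹ := by rw [ha1]; group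
      rw [this]
      exact H.mul_mem hβ (H.inv_mem hb)
    · intro u hu
      simp only [mem_coe, hK, mem_filter, mem_univ, true_and] at hu
      obtain ⟨hu1, hu2⟩ := hu
      simp only [mem_coe, hP, mem_filter, mem_univ, true_and]
      have hd2 : g⁻¹ * u⁻¹ * g * β ∈ H := by
        have : g⁻¹ * u⁻¹ * g = (g⁻¹ * u * g)⁻¹ := by group
        exact H.mul_mem (this ▸ H.inv_mem hu2) hβ
      refine ⟨⟨H.mul_mem hα hu1, hd2, ?_⟩, ?_⟩
      · have key : g * (β * α) * g = α⁻¹ * x ^ 2 * β⁻¹ := by rw [hxe, pow_two]; group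
        have key2 : g * (g⁻¹ * u⁻¹ * g * β * (α * u)) * g
            = u⁻¹ * (g * (β * α) * g) * (g⁻¹ * u * g) := by group
        rw [key2, key]
        exact H.mul_mem (H.mul_mem (H.inv_mem hu1)
          (H.mul_mem (H.mul_mem (H.inv_mem hα) hx2) (H.inv_mem hβ))) hu2
      · rw [hxe]; group
    · rintro ⟨a, b⟩ hp
      simp only [mem_coe, hP, mem_filter, mem_univ, true_and] at hp
      obtain ⟨⟨ha, hb, _⟩, hpe⟩ := hp
      have hb1 : b = g⁻¹ * (α⁻¹ * a)⁻¹ * g * β := by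
        refine mul_left_cancel (a := a * g) ?_
        rw [hpe, hxe]; group
      rw [hb1]
      simp only [Prod.mk.injEq, and_true]
      group
    · intro u hu
      group
  -- Count 2 : P.card = C.card * HF.card
  have count2 : P.card = C.card * HF.card := by
    have hmaps : ∀ p ∈ P, p.2 * p.1 ∈ C := by
      rintro ⟨a, b⟩ hp
      simp only [mem_coe, hP, mem_filter, mem_univ, true_and] at hp
      obtain ⟨ha, hb, hgba⟩ := hp
      simp only [mem_coe, hC, mem_filter, mem_univ, true_and]
      exact ⟨H.mul_mem hb ha, hgba⟩
    rw [card_eq_sum_card_fiberwise hmaps]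
    rw [Finset.sum_congr rfl (fun c hc => ?_), Finset.sum_const, smul_eq_mul]
    simp only [hC, mem_filter, mem_univ, true_and] at hc
    obtain ⟨hc1, hc2⟩ := hc
    refine Finset.card_nbij' (fun p => p.1) (fun a => (a, c * a⁻¹)) ?_ ?_ ?_ ?_
    · rintro ⟨a, b⟩ hp
      simp only [mem_coe, hP, mem_filter, mem_univ, true_and] at hp
      simp only [mem_coe, hHF, mem_filter, mem_univ, true_and]
      exact hp.1.1
    · intro a ha
      simp only [mem_coe, hHF, mem_filter, mem_univ, true_and] at ha
      simp only [mem_coe, hP, mem_filter, mem_univ, true_and]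
      have h1 : c * a⁻¹ * a = c := by group
      exact ⟨⟨ha, H.mul_mem hc1 (H.inv_mem ha), by rw [h1]; exact hc2⟩, h1⟩
    · rintro ⟨a, b⟩ hp
      simp only [mem_coe, hP, mem_filter, mem_univ, true_and] at hp
      obtain ⟨_, hpe⟩ := hp
      have hb1 : b = c * a⁻¹ := by rw [← hpe]; group
      rw [hb1]
    · intro a ha; rfl
  -- C.card = K.card
  have hCK : C.card = K.card := by
    have hginv : g⁻¹ ∈ DoubleCoset.doubleCoset g (H : Set G) (H : Set G) := by
      rw [hg]; exact DoubleCoset.mem_doubleCoset_self H H g⁻¹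
    obtain ⟨a, ha, b, hb, heq⟩ := DoubleCoset.mem_doubleCoset.1 hginv
    -- heq : g⁻¹ = a * g * b
    have hbval : b = g⁻¹ * a⁻¹ * g⁻¹ := by
      refine mul_left_cancel (a := a * g) ?_
      rw [← heq]; group
    have hgag : g * a * g ∈ H := by
      have : g * a * g = b⁻¹ := by rw [hbval]; group
      rw [this]; exact H.inv_mem hb
    refine Finset.card_nbij' (fun c => g * (c * a⁻¹) * g⁻¹)
      (fun u => g⁻¹ * u * g * a) ?_ ?_ ?_ ?_
    · intro c hc
      simp only [mem_coe, hC, mem_filter, mem_univ, true_and] at hc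
      obtain ⟨hc1, hc2⟩ := hc
      simp only [mem_coe, hK, mem_filter, mem_univ, true_and]
      constructor
      · have : g * (c * a⁻¹) * g⁻¹ = (g * c * g) * (g * a * g)⁻¹ := by group
        rw [this]; exact H.mul_mem hc2 (H.inv_mem hgag)
      · have : g⁻¹ * (g * (c * a⁻¹) * g⁻¹) * g = c * a⁻¹ := by group
        rw [this]; exact H.mul_mem hc1 (H.inv_mem ha)
    · intro u hu
      simp only [mem_coe, hK, mem_filter, mem_univ, true_and] at hu
      obtain ⟨hu1, hu2⟩ := hu
      simp only [mem_coe, hC, mem_filter, mem_univ, true_and]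
      constructor
      · exact H.mul_mem hu2 ha
      · have : g * (g⁻¹ * u * g * a) * g = u * (g * a * g) := by group
        rw [this]; exact H.mul_mem hu1 hgag
    · intro c hc; group
    · intro u hu; group
  -- K.card ≠ 0
  have hKpos : K.card ≠ 0 := by
    have : (1 : G) ∈ K := by
      simp only [hK, mem_filter, mem_univ, true_and]
      exact ⟨H.one_mem, by rw [show g⁻¹ * 1 * g = 1 from by group]; exact H.one_mem⟩
    exact Finset.card_ne_zero_of_mem this
  have : T.card * K.card = Nat.card H * K.card := by
    rw [← count1, count2, hCK, hHFcard, mul_comm]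
  exact Nat.eq_of_mul_eq_mul_right (Nat.pos_of_ne_zero hKpos) this

end SelfInvAux

/-- The number of self-inverse double cosets in `H\G/H` equals
`(1/|H|) · Σ_{h∈H} |{g ∈ G : g² = h}|`. -/
theorem selfInverse_doubleCosets_card_mul (G : Type*) [Group G] [Fintype G]
    (H : Subgroup G) :
    Nat.card H *
      Nat.card {D : Set G | ∃ g : G, D = DoubleCoset.doubleCoset g (H : Set G) (H : Set G) ∧
        D = DoubleCoset.doubleCoset g⁻¹ (H : Set G) (H : Set G)} =
    ∑ᶠ h ∈ (H : Set G), Nat.card {g : G | g ^ 2 = h} := by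
  classical
  set t : Finset (Set G) :=
    (univ.filter fun g : G =>
      DoubleCoset.doubleCoset g (H : Set G) (H : Set G) = DoubleCoset.doubleCoset g⁻¹ (H : Set G) (H : Set G)).image
      (fun g => DoubleCoset.doubleCoset g (H : Set G) (H : Set G)) with ht
  set HF : Finset G := univ.filter (fun a : G => a ∈ H) with hHF
  -- identify the set of self-inverse double cosets with ↑t
  have hset : {D : Set G | ∃ g : G, D = DoubleCoset.doubleCoset g (H : Set G) (H : Set G) ∧
      D = DoubleCoset.doubleCoset g⁻¹ (H : Set G) (H : Set G)} = (↑t : Set (Set G)) := by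
    ext D
    simp only [Set.mem_setOf_eq, ht, coe_image, Set.mem_image, coe_filter, mem_univ,
      true_and, Set.mem_setOf_eq]
    constructor
    · rintro ⟨g, rfl, h2⟩
      exact ⟨g, h2, rfl⟩
    · rintro ⟨g, h2, rfl⟩
      exact ⟨g, rfl, h2⟩
  have hcardD : Nat.card {D : Set G | ∃ g : G, D = DoubleCoset.doubleCoset g (H : Set G) (H : Set G) ∧
      D = DoubleCoset.doubleCoset g⁻¹ (H : Set G) (H : Set G)} = t.card := by
    rw [hset, Nat.card_coe_set_eq, Set.ncard_coe_finset]
  -- the right-hand side as a Finset sum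
  have hHset : (H : Set G) = (↑HF : Set G) := by
    ext a; simp [hHF]
  have hterm : ∀ h : G, Nat.card {g : G | g ^ 2 = h}
      = (univ.filter fun g : G => g ^ 2 = h).card := by
    intro h
    rw [Nat.card_coe_set_eq, Set.ncard_eq_toFinset_card', Set.toFinset_setOf]
  have hRHS : ∑ᶠ h ∈ (H : Set G), Nat.card {g : G | g ^ 2 = h}
      = ∑ h ∈ HF, (univ.filter fun g : G => g ^ 2 = h).card := by
    rw [hHset, finsum_mem_coe_finset]
    exact Finset.sum_congr rfl fun h _ => hterm h
  -- the set of square roots of elements of H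
  set S : Finset G := univ.filter (fun x : G => x ^ 2 ∈ H) with hS
  have hsum : S.card = ∑ h ∈ HF, (univ.filter fun g : G => g ^ 2 = h).card := by
    have hmaps : ∀ x ∈ S, x ^ 2 ∈ HF := by
      intro x hx
      simp only [hS, mem_filter, mem_univ, true_and] at hx
      simp only [hHF, mem_filter, mem_univ, true_and]
      exact hx
    rw [card_eq_sum_card_fiberwise hmaps]
    refine Finset.sum_congr rfl fun h hh => ?_
    have hhH : h ∈ H := by simpa [hHF] using hh
    congr 1
    ext x
    simp only [hS, mem_filter, mem_univ, true_and]
    constructor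
    · rintro ⟨_, h2⟩; exact h2
    · rintro h2; exact ⟨by rw [h2]; exact hhH, h2⟩
  -- partition S into the self-inverse double cosets
  have hpart : S.card = t.card * Nat.card H := by
    have hmaps : ∀ x ∈ S, DoubleCoset.doubleCoset x (H : Set G) (H : Set G) ∈ t := by
      intro x hx
      simp only [hS, mem_filter, mem_univ, true_and] at hx
      have hxinv : x⁻¹ ∈ DoubleCoset.doubleCoset x (H : Set G) (H : Set G) :=
        DoubleCoset.mem_doubleCoset.2 ⟨(x ^ 2)⁻¹, H.inv_mem hx, 1, H.one_mem, by rw [pow_two]; group⟩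
      have hinv : DoubleCoset.doubleCoset x (H : Set G) (H : Set G)
          = DoubleCoset.doubleCoset x⁻¹ (H : Set G) (H : Set G) := (DoubleCoset.doubleCoset_eq_of_mem hxinv).symm
      simp only [ht, mem_image, mem_filter, mem_univ, true_and]
      exact ⟨x, hinv, rfl⟩
    rw [card_eq_sum_card_fiberwise hmaps]
    rw [Finset.sum_congr rfl (fun DD hDD => ?_), Finset.sum_const, smul_eq_mul]
    simp only [ht, mem_image, mem_filter, mem_univ, true_and] at hDD
    obtain ⟨g, hginv, rfl⟩ := hDD
    rw [show (S.filter fun x => DoubleCoset.doubleCoset x (H : Set G) (H : Set G)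
          = DoubleCoset.doubleCoset g (H : Set G) (H : Set G))
        = univ.filter (fun x : G => x ∈ DoubleCoset.doubleCoset g (H : Set G) (H : Set G) ∧ x ^ 2 ∈ H)
      from ?_]
    · exact selfinv_doset_card H g hginv
    · ext x
      simp only [hS, mem_filter, mem_univ, true_and]
      constructor
      · rintro ⟨h2, heq⟩
        exact ⟨heq ▸ DoubleCoset.mem_doubleCoset_self H H x, h2⟩
      · rintro ⟨hmem, h2⟩
        exact ⟨h2, DoubleCoset.doubleCoset_eq_of_mem hmem⟩
  rw [hcardD, hRHS, ← hsum, hpart, mul_comm]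
end

section
/- Let G be a finite group and H a subgroup. The number of self-inverse double cosets in H\G/H equals (1/|G|) · Σ_{g∈G} χ(g²), where χ(x) is the number of left cosets of H fixed by x under the left-multiplication action of G on G/H. -/
open MulAction DoubleCoset

section
variable {G : Type*} [Group G]

instance dosetMulAction (H : Subgroup G) : MulAction (H × H) G where
  smul a g := a.1 * g * (a.2 : G)⁻¹
  one_smul g := by
    show (((1 : H × H).1 : G)) * g * ((((1 : H × H).2 : G)))⁻¹ = g
    simp
  mul_smul a b g := by
    show ((a.1 * b.1 : H) : G) * g * (((a.2 * b.2 : H) : G))⁻¹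
        = (a.1 : G) * ((b.1 : G) * g * ((b.2 : G))⁻¹) * ((a.2 : G))⁻¹
    push_cast
    group

lemma dmact_smul_def (H : Subgroup G) (a : H × H) (g : G) :
    a • g = (a.1 : G) * g * ((a.2 : G))⁻¹ := rfl

lemma orbit_eq_doset (H : Subgroup G) (g : G) :
    orbit (H × H) g = doubleCoset g (H : Set G) (H : Set G) := by
  ext x
  simp only [mem_orbit_iff, dmact_smul_def, mem_doubleCoset]
  constructor
  · rintro ⟨⟨h, k⟩, rfl⟩
    exact ⟨h, h.2, (k : G)⁻¹, H.inv_mem k.2, rfl⟩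
  · rintro ⟨h, hh, k, hk, rfl⟩
    exact ⟨(⟨h, hh⟩, ⟨k⁻¹, H.inv_mem hk⟩), by simp⟩

/-- Nat.card of a sigma type over a Fintype. -/
lemma nat_card_sigma {ι : Type*} [Fintype ι] {β : ι → Type*} [∀ i, Finite (β i)] :
    Nat.card (Σ i, β i) = ∑ i, Nat.card (β i) := by
  letI : ∀ i, Fintype (β i) := fun i => Fintype.ofFinite _
  simp only [Nat.card_eq_fintype_card]
  exact Fintype.card_sigma

/-- Translation: the twisted set has the same cardinality as the stabilizer. -/
lemma card_twist (H : Subgroup G) (g : G) (hg : g⁻¹ ∈ orbit (H × H) g) :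
    Nat.card {a : H × H // a • g = g⁻¹} = Nat.card (stabilizer (H × H) g) := by
  obtain ⟨a₀, ha₀⟩ := mem_orbit_iff.mp hg
  refine Nat.card_congr ⟨fun a => ⟨a₀⁻¹ * a.1, ?_⟩, fun b => ⟨a₀ * b.1, ?_⟩, ?_, ?_⟩
  · have : (a₀⁻¹ * a.1) • g = a₀⁻¹ • (a.1 • g) := mul_smul _ _ _
    rw [mem_stabilizer_iff, this, a.2, inv_smul_eq_iff, ha₀]
  · have : (a₀ * b.1) • g = a₀ • (b.1 • g) := mul_smul _ _ _
    rw [this, b.2.out, ha₀]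
  · intro a; ext1; simp [mul_assoc]
  · intro b; ext1; simp [mul_assoc]

lemma card_stab_const (H : Subgroup G) {g x : G} (hx : x ∈ orbit (H × H) g) :
    Nat.card (stabilizer (H × H) x) = Nat.card (stabilizer (H × H) g) := by
  obtain ⟨m, rfl⟩ := mem_orbit_iff.mp hx
  rw [stabilizer_smul_eq_stabilizer_map_conj]
  exact Nat.card_congr (Subgroup.equivMapOfInjective _ _ (MulAut.conj m).injective).symm.toEquiv

lemma orbit_stab (H : Subgroup G) (g : G) :
    Nat.card (orbit (H × H) g) * Nat.card (stabilizer (H × H) g)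
      = Nat.card H * Nat.card H := by
  rw [← Nat.card_prod, Nat.card_congr (orbitProdStabilizerEquivGroup (H × H) g),
    Nat.card_prod]
end

section
variable {G : Type*} [Group G]

lemma inv_mem_doset_inv {H : Subgroup G} {g x : G}
    (hx : x ∈ doubleCoset g⁻¹ (H : Set G) (H : Set G)) :
    x⁻¹ ∈ doubleCoset g (H : Set G) (H : Set G) := by
  obtain ⟨h, hh, k, hk, rfl⟩ := mem_doubleCoset.mp hx
  exact mem_doubleCoset.mpr ⟨k⁻¹, H.inv_mem hk, h⁻¹, H.inv_mem hh, by group⟩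

lemma card_fiber [Finite G] (H : Subgroup G) (D : Set G) (g₀ : G)
    (hD1 : D = doubleCoset g₀ (H : Set G) (H : Set G))
    (hD2 : D = doubleCoset g₀⁻¹ (H : Set G) (H : Set G)) :
    Nat.card {q : G × (H × H) // q.2 • q.1 = q.1⁻¹ ∧ q.1 ∈ D}
      = Nat.card H * Nat.card H := by
  have e : {q : G × (H × H) // q.2 • q.1 = q.1⁻¹ ∧ q.1 ∈ D}
      ≃ Σ x : D, {a : H × H // a • (x : G) = (x : G)⁻¹} :=
    ⟨fun q => ⟨⟨q.1.1, q.2.2⟩, ⟨q.1.2, q.2.1⟩⟩,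
     fun s => ⟨(s.1, s.2.1), s.2.2, s.1.2⟩,
     fun q => rfl, fun s => rfl⟩
  rw [Nat.card_congr e]
  letI : Fintype D := Fintype.ofFinite _
  rw [nat_card_sigma]
  have horb : ∀ x : G, x ∈ D → x ∈ orbit (H × H) g₀ := by
    intro x hx
    rw [orbit_eq_doset, ← hD1]; exact hx
  have key : ∀ x : D, Nat.card {a : H × H // a • (x : G) = (x : G)⁻¹}
      = Nat.card (stabilizer (H × H) g₀) := by
    intro x
    have hxo : (x : G) ∈ orbit (H × H) g₀ := horb _ x.2
    have hinv : (x : G)⁻¹ ∈ orbit (H × H) (x : G) := by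
      rw [MulAction.orbit_eq_iff.mpr hxo]
      exact horb _ (hD1 ▸ inv_mem_doset_inv (hD2 ▸ x.2))
    rw [card_twist H _ hinv]
    exact card_stab_const H hxo
  have hcD : Nat.card D = Nat.card (orbit (H × H) g₀) := by
    rw [orbit_eq_doset, ← hD1]
  rw [Finset.sum_congr rfl fun x _ => key x, Finset.sum_const, smul_eq_mul,
    Finset.card_univ, ← Nat.card_eq_fintype_card, hcD, orbit_stab]
end

section
variable {G : Type*} [Group G]

lemma card_Q [Finite G] (H : Subgroup G) :
    Nat.card {q : G × (H × H) // q.2 • q.1 = q.1⁻¹}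
      = Nat.card H * Nat.card H *
        Nat.card {D : Set G | ∃ g : G, D = doubleCoset g (H : Set G) (H : Set G) ∧
          D = doubleCoset g⁻¹ (H : Set G) (H : Set G)} := by
  set SI : Set (Set G) := {D : Set G | ∃ g : G, D = doubleCoset g (H : Set G) (H : Set G) ∧
    D = doubleCoset g⁻¹ (H : Set G) (H : Set G)} with hSI
  have hself : ∀ q : {q : G × (H × H) // q.2 • q.1 = q.1⁻¹},
      doubleCoset q.1.1 (H : Set G) (H : Set G) ∈ SI := by
    intro q
    refine ⟨q.1.1, rfl, ?_⟩
    have : q.1.1⁻¹ ∈ doubleCoset q.1.1 (H : Set G) (H : Set G) := by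
      rw [← orbit_eq_doset, ← q.2]
      exact mem_orbit _ _
    exact (doubleCoset_eq_of_mem this).symm
  set f : {q : G × (H × H) // q.2 • q.1 = q.1⁻¹} → SI :=
    fun q => ⟨doubleCoset q.1.1 (H : Set G) (H : Set G), hself q⟩ with hf
  rw [Nat.card_congr (Equiv.sigmaFiberEquiv f).symm]
  letI : Fintype SI := Fintype.ofFinite _
  rw [nat_card_sigma]
  have key : ∀ D : SI, Nat.card {q // f q = D} = Nat.card H * Nat.card H := by
    intro D
    obtain ⟨g₀, hD1, hD2⟩ := D.2
    have e : {q // f q = D} ≃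
        {q : G × (H × H) // q.2 • q.1 = q.1⁻¹ ∧ q.1 ∈ (D : Set G)} := by
      refine ⟨fun p => ⟨p.1.1, p.1.2, ?_⟩, fun r => ⟨⟨r.1, r.2.1⟩, ?_⟩, ?_, ?_⟩
      · have : doubleCoset p.1.1.1 (H : Set G) (H : Set G) = (D : Set G) :=
          congrArg Subtype.val p.2
        rw [← this]
        exact mem_doubleCoset_self H H p.1.1.1
      · refine Subtype.ext ?_
        show doubleCoset r.1.1 (H : Set G) (H : Set G) = (D : Set G)
        exact (doubleCoset_eq_of_mem (hD1 ▸ r.2.2)).trans hD1.symm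
      · intro p; (ext : 2) <;> rfl
      · intro r; rfl
    rw [Nat.card_congr e]
    exact card_fiber H D g₀ hD1 hD2
  rw [Finset.sum_congr rfl fun D _ => key D, Finset.sum_const, smul_eq_mul,
    Finset.card_univ, ← Nat.card_eq_fintype_card, mul_comm]
end

section
variable {G : Type*} [Group G]

lemma aux_k (H : Subgroup G) {g : G} {h k : H} (hq : (h : G) * g * ((k : G))⁻¹ = g⁻¹) :
    (g * (h : G)) ^ 2 = (k : G) * (h : G) := by
  have h2 : g * ((h : G) * g * ((k : G))⁻¹) = g * g⁻¹ := by rw [hq]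
  rw [mul_inv_cancel, ← mul_assoc, ← mul_assoc, mul_inv_eq_one] at h2
  rw [pow_two, ← h2]
  group

lemma card_Q' (H : Subgroup G) :
    Nat.card {q : G × (H × H) // q.2 • q.1 = q.1⁻¹}
      = Nat.card {t : G // t ^ 2 ∈ H} * Nat.card H := by
  rw [← Nat.card_prod]
  refine Nat.card_congr ?_
  refine ⟨fun q => (⟨q.1.1 * (q.1.2.1 : G), ?_⟩, q.1.2.1⁻¹),
    fun p => ⟨((p.1 : G) * (p.2 : G), (p.2⁻¹, ⟨(p.1 : G) ^ 2, p.1.2⟩ * p.2)), ?_⟩, ?_, ?_⟩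
  · obtain ⟨⟨g, h, k⟩, hq⟩ := q
    rw [dmact_smul_def] at hq
    dsimp only at hq
    show (g * (h : G)) ^ 2 ∈ H
    rw [aux_k H hq]
    exact H.mul_mem k.2 h.2
  · rw [dmact_smul_def]
    show ((p.2 : G))⁻¹ * ((p.1 : G) * (p.2 : G)) * (((p.1 : G) ^ 2 * (p.2 : G)))⁻¹
        = (((p.1 : G)) * ((p.2 : G)))⁻¹
    group
  · rintro ⟨⟨g, h, k⟩, hq⟩
    rw [dmact_smul_def] at hq
    apply Subtype.ext
    simp only [Prod.mk.injEq]
    refine ⟨by simp, by simp, Subtype.ext ?_⟩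
    show (g * (h : G)) ^ 2 * ((h : G))⁻¹ = (k : G)
    dsimp only at hq
    rw [aux_k H hq]
    group
  · rintro ⟨t, u⟩
    simp only [Prod.mk.injEq]
    refine ⟨Subtype.ext ?_, by simp⟩
    show (t : G) * (u : G) * ((u : G))⁻¹ = (t : G)
    group
end

section
variable {G : Type*} [Group G]

lemma card_fixed (H : Subgroup G) (x : G) :
    Nat.card {K : G ⧸ H | x • K = K} * Nat.card H
      = Nat.card {a : G // a⁻¹ * x * a ∈ H} := by
  have hset : (QuotientGroup.mk ⁻¹' {K : G ⧸ H | x • K = K} : Set G)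
      = {a : G | a⁻¹ * x * a ∈ H} := by
    ext a
    simp only [Set.mem_preimage, Set.mem_setOf_eq]
    rw [show x • (QuotientGroup.mk a : G ⧸ H) = QuotientGroup.mk (x * a) from rfl,
      QuotientGroup.eq]
    rw [show (x * a)⁻¹ * a = (a⁻¹ * x * a)⁻¹ by group, inv_mem_iff]
  have h1 : Nat.card {a : G // a⁻¹ * x * a ∈ H}
      = Nat.card (H × {K : G ⧸ H // x • K = K}) :=
    Nat.card_congr ((Equiv.setCongr hset.symm).trans
      (QuotientGroup.preimageMkEquivSubgroupProdSet H {K : G ⧸ H | x • K = K}))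
  rw [h1, Nat.card_prod, mul_comm]
  rfl

lemma conj_sq (x y : G) : (y⁻¹ * x * y) ^ 2 = y⁻¹ * x ^ 2 * y := by
  rw [pow_two, pow_two]; group

lemma conj_sq' (x y : G) : y⁻¹ * (y * x * y⁻¹) ^ 2 * y = x ^ 2 := by
  rw [pow_two, pow_two]; group

lemma card_sum_pairs (H : Subgroup G) [Fintype G] :
    (∑ g : G, Nat.card {a : G // a⁻¹ * g ^ 2 * a ∈ H})
      = Nat.card G * Nat.card {t : G // t ^ 2 ∈ H} := by
  rw [← nat_card_sigma, ← Nat.card_prod]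
  refine Nat.card_congr ⟨fun s => (s.2.1, ⟨(s.2.1 : G)⁻¹ * s.1 * s.2.1, ?_⟩),
    fun p => ⟨p.1 * (p.2 : G) * p.1⁻¹, p.1, ?_⟩, ?_, ?_⟩
  · rw [conj_sq]
    exact s.2.2
  · rw [conj_sq']
    exact p.2.2
  · rintro ⟨g, a, pf⟩
    exact Sigma.subtype_ext (by group) (by group)
  · rintro ⟨a, t⟩
    simp only [Prod.mk.injEq]
    exact ⟨trivial, Subtype.ext (by group)⟩
end

/-- The number of self-inverse double cosets in `H\G/H` equals
`(1/|G|) · Σ_{g∈G} χ(g²)`, where `χ(x)` is the number of left cosets of `H`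
fixed by `x` under the left-multiplication action of `G` on `G/H`. -/
theorem selfInverse_doubleCosets_card_eq_sum_fixed_cosets (G : Type*) [Group G] [Fintype G]
    (H : Subgroup G) :
    Nat.card G *
      Nat.card {D : Set G | ∃ g : G, D = DoubleCoset.doubleCoset g (H : Set G) (H : Set G) ∧
        D = DoubleCoset.doubleCoset g⁻¹ (H : Set G) (H : Set G)} =
    ∑ g : G, Nat.card {K : G ⧸ H | (g ^ 2) • K = K} := by
  have hH : 0 < Nat.card H := Nat.card_pos
  have hQ := (card_Q' H).symm.trans (card_Q H)
  have hS : Nat.card {t : G // t ^ 2 ∈ H}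
      = Nat.card H * Nat.card {D : Set G | ∃ g : G, D = DoubleCoset.doubleCoset g (H : Set G) (H : Set G) ∧
        D = DoubleCoset.doubleCoset g⁻¹ (H : Set G) (H : Set G)} := by
    apply Nat.eq_of_mul_eq_mul_right hH
    rw [hQ]; ring
  apply Nat.eq_of_mul_eq_mul_right hH
  have hsum : (∑ g : G, Nat.card {K : G ⧸ H | (g ^ 2) • K = K} * Nat.card H)
      = Nat.card G * Nat.card {t : G // t ^ 2 ∈ H} := by
    rw [Finset.sum_congr rfl fun g _ => card_fixed H (g ^ 2)]
    exact card_sum_pairs H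
  rw [Finset.sum_mul, hsum, hS]
  ring
end

section
/- Let G be a finite group with subgroups H₁ and H₂, and let C₁,...,C_r be the conjugacy classes of G. Then |H₁\G/H₂| = (1/(|H₁|·|H₂|)) · Σᵢ (|G|/|Cᵢ|) · |H₁ ∩ Cᵢ| · |H₂ ∩ Cᵢ|. -/
open MulAction
open scoped Classical

/-- The action of `H₁ × H₂` on `G` whose orbits are the double cosets. -/
instance dosetAct {G : Type*} [Group G] (H₁ H₂ : Subgroup G) : MulAction (H₁ × H₂) G where
  smul p g := p.1 * g * (p.2 : G)⁻¹
  one_smul g := by show (1:G) * g * ((1:G))⁻¹ = g; simp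
  mul_smul a b g := by
    show ↑(a.1 * b.1) * g * (↑(a.2 * b.2))⁻¹ = ↑a.1 * (↑b.1 * g * (↑b.2)⁻¹) * (↑a.2)⁻¹
    simp [mul_assoc]

/-- The number of elements conjugating `x` to `y`. -/
lemma card_conjugators {G : Type*} [Group G] [Fintype G] (x y : G) :
    Nat.card {g : G // g * x * g⁻¹ = y} =
      if ConjClasses.mk x = ConjClasses.mk y then
        Nat.card G / Nat.card (ConjClasses.mk x).carrier else 0 := by
  classical
  split_ifs with h
  · obtain ⟨g₀, hg₀⟩ := isConj_iff.1 (ConjClasses.mk_eq_mk_iff_isConj.1 h)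
    have e : {g : G // g * x * g⁻¹ = y} ≃ MulAction.stabilizer (ConjAct G) x := by
      refine ⟨fun g => ⟨ConjAct.toConjAct (g₀⁻¹ * ↑g), ?_⟩,
        fun u => ⟨g₀ * ConjAct.ofConjAct (u : ConjAct G), ?_⟩, fun g => ?_, fun u => ?_⟩
      · have hg := g.2
        rw [MulAction.mem_stabilizer_iff, ConjAct.smul_def, ConjAct.ofConjAct_toConjAct]
        have : (g₀⁻¹ * ↑g) * x * (g₀⁻¹ * ↑g)⁻¹ = g₀⁻¹ * (↑g * x * (↑g)⁻¹) * g₀ := by group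
        rw [this, hg, ← hg₀]; group
      · have hu := u.2
        rw [MulAction.mem_stabilizer_iff, ConjAct.smul_def] at hu
        show (g₀ * ConjAct.ofConjAct (u : ConjAct G)) * x *
            (g₀ * ConjAct.ofConjAct (u : ConjAct G))⁻¹ = y
        have : (g₀ * ConjAct.ofConjAct (u : ConjAct G)) * x *
            (g₀ * ConjAct.ofConjAct (u : ConjAct G))⁻¹ =
            g₀ * (ConjAct.ofConjAct (u : ConjAct G) * x *
              (ConjAct.ofConjAct (u : ConjAct G))⁻¹) * g₀⁻¹ := by group
        rw [this, hu, hg₀]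
      · ext; simp
      · ext; simp
    rw [Nat.card_congr e]
    have h2 : Nat.card (MulAction.orbit (ConjAct G) x) *
        Nat.card (MulAction.stabilizer (ConjAct G) x) = Nat.card (ConjAct G) := by
      rw [← Nat.card_prod]
      exact Nat.card_congr (MulAction.orbitProdStabilizerEquivGroup (ConjAct G) x)
    have horb : MulAction.orbit (ConjAct G) x = (ConjClasses.mk x).carrier :=
      ConjAct.orbit_eq_carrier_conjClasses x
    have hGcard : Nat.card (ConjAct G) = Nat.card G :=
      Nat.card_congr ConjAct.ofConjAct.toEquiv
    have hcpos : 0 < Nat.card (ConjClasses.mk x).carrier := by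
      have : x ∈ (ConjClasses.mk x).carrier := ConjClasses.mem_carrier_mk
      have : Nonempty (ConjClasses.mk x).carrier := ⟨⟨x, this⟩⟩
      exact Nat.card_pos
    rw [horb, hGcard] at h2
    rw [← h2, Nat.mul_div_cancel_left _ hcpos]
  · have : IsEmpty {g : G // g * x * g⁻¹ = y} :=
      ⟨fun g => h (ConjClasses.mk_eq_mk_iff_isConj.2 (isConj_iff.2 ⟨g, g.2⟩))⟩
    exact Nat.card_of_isEmpty

lemma card_inter_conj {G : Type*} [Group G] [Fintype G] (H : Subgroup G) (c : ConjClasses G) :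
    Nat.card ((H : Set G) ∩ c.carrier : Set G) =
      ∑ h : H, if ConjClasses.mk (h : G) = c then 1 else 0 := by
  have e : ((H : Set G) ∩ c.carrier : Set G) ≃ {h : H // ConjClasses.mk (h : G) = c} :=
    ⟨fun x => ⟨⟨↑x, x.2.1⟩, ConjClasses.mem_carrier_iff_mk_eq.1 x.2.2⟩,
     fun h => ⟨↑h.1, ⟨h.1.2, ConjClasses.mem_carrier_iff_mk_eq.2 h.2⟩⟩,
     fun x => rfl, fun h => rfl⟩
  rw [Nat.card_congr e, Nat.card_eq_fintype_card, Fintype.card_subtype, Finset.card_filter]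

lemma rhs_eq_double_sum {G : Type*} [Group G] [Fintype G] (H₁ H₂ : Subgroup G) :
    (∑ᶠ c : ConjClasses G,
      (Nat.card G / Nat.card c.carrier) *
        (Nat.card ((H₁ : Set G) ∩ c.carrier : Set G) *
          Nat.card ((H₂ : Set G) ∩ c.carrier : Set G))) =
    ∑ h₁ : H₁, ∑ h₂ : H₂,
      if ConjClasses.mk (↑h₂ : G) = ConjClasses.mk (↑h₁ : G) then
        Nat.card G / Nat.card (ConjClasses.mk (↑h₂ : G)).carrier else 0 := by
  classical
  rw [finsum_eq_sum_of_fintype]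
  have key : ∀ (h₁ : H₁) (h₂ : H₂), (∑ c : ConjClasses G,
      (Nat.card G / Nat.card c.carrier) *
        ((if ConjClasses.mk (↑h₁ : G) = c then 1 else 0) *
          (if ConjClasses.mk (↑h₂ : G) = c then 1 else 0))) =
      if ConjClasses.mk (↑h₂ : G) = ConjClasses.mk (↑h₁ : G) then
        Nat.card G / Nat.card (ConjClasses.mk (↑h₂ : G)).carrier else 0 := by
    intro h₁ h₂
    rw [Finset.sum_eq_single (ConjClasses.mk (↑h₂ : G))]
    · by_cases hc : ConjClasses.mk (↑h₂ : G) = ConjClasses.mk (↑h₁ : G)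
      · simp [hc, eq_comm]
      · have h1 : ¬ ConjClasses.mk (↑h₁ : G) = ConjClasses.mk (↑h₂ : G) :=
          fun hc' => hc hc'.symm
        simp [hc, h1]
    · intro b _ hb
      have h2 : ¬ ConjClasses.mk (↑h₂ : G) = b := fun h => hb h.symm
      simp [h2]
    · intro h; exact absurd (Finset.mem_univ _) h
  calc ∑ c : ConjClasses G, (Nat.card G / Nat.card c.carrier) *
        (Nat.card ((H₁ : Set G) ∩ c.carrier : Set G) *
          Nat.card ((H₂ : Set G) ∩ c.carrier : Set G))
      = ∑ c : ConjClasses G, ∑ h₁ : H₁, ∑ h₂ : H₂,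
          (Nat.card G / Nat.card c.carrier) *
            ((if ConjClasses.mk (↑h₁ : G) = c then 1 else 0) *
              (if ConjClasses.mk (↑h₂ : G) = c then 1 else 0)) := by
        refine Finset.sum_congr rfl fun c _ => ?_
        rw [card_inter_conj H₁ c, card_inter_conj H₂ c, Finset.sum_mul_sum,
          Finset.mul_sum]
        refine Finset.sum_congr rfl fun h₁ _ => ?_
        rw [Finset.mul_sum]
    _ = ∑ h₁ : H₁, ∑ h₂ : H₂, ∑ c : ConjClasses G,
          (Nat.card G / Nat.card c.carrier) *
            ((if ConjClasses.mk (↑h₁ : G) = c then 1 else 0) *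
              (if ConjClasses.mk (↑h₂ : G) = c then 1 else 0)) := by
        rw [Finset.sum_comm]
        refine Finset.sum_congr rfl fun h₁ _ => Finset.sum_comm
    _ = _ := Finset.sum_congr rfl fun h₁ _ => Finset.sum_congr rfl fun h₂ _ => key h₁ h₂

/-- `|H₁\G/H₂| = (1/(|H₁|·|H₂|)) · Σᵢ (|G|/|Cᵢ|) · |H₁ ∩ Cᵢ| · |H₂ ∩ Cᵢ|`,
where the sum is over the conjugacy classes of `G`. -/
theorem card_doubleCosets_mul (G : Type*) [Group G] [Fintype G]
    (H₁ H₂ : Subgroup G) :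
    Nat.card (DoubleCoset.Quotient (H₁ : Set G) (H₂ : Set G)) * (Nat.card H₁ * Nat.card H₂) =
    ∑ᶠ c : ConjClasses G,
      (Nat.card G / Nat.card c.carrier) *
        (Nat.card ((H₁ : Set G) ∩ c.carrier : Set G) *
          Nat.card ((H₂ : Set G) ∩ c.carrier : Set G)) := by
  classical
  have e1 : DoubleCoset.Quotient (H₁ : Set G) (H₂ : Set G) ≃
      Quotient (orbitRel (H₁ × H₂) G) := by
    refine Quotient.congrRight fun a b => ?_
    rw [DoubleCoset.rel_iff, orbitRel_apply, mem_orbit_iff]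
    constructor
    · rintro ⟨h, hh, k, hk, rfl⟩
      refine ⟨(⟨h⁻¹, H₁.inv_mem hh⟩, ⟨k, hk⟩), ?_⟩
      show h⁻¹ * (h * a * k) * k⁻¹ = a
      group
    · rintro ⟨⟨h, k⟩, hp⟩
      have : (h : G) * b * (k : G)⁻¹ = a := hp
      exact ⟨(h : G)⁻¹, H₁.inv_mem h.2, (k : G), k.2, by rw [← this]; group⟩
  have hb := MulAction.sum_card_fixedBy_eq_card_orbits_mul_card_group (H₁ × H₂) G
  have hfix : ∀ p : H₁ × H₂, Fintype.card (fixedBy G p) =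
      if ConjClasses.mk (↑p.2 : G) = ConjClasses.mk (↑p.1 : G) then
        Nat.card G / Nat.card (ConjClasses.mk (↑p.2 : G)).carrier else 0 := by
    intro p
    rw [← Nat.card_eq_fintype_card, ← card_conjugators]
    refine Nat.card_congr (Equiv.subtypeEquivRight fun g => ?_)
    show (↑p.1 : G) * g * (↑p.2 : G)⁻¹ = g ↔ g * ↑p.2 * g⁻¹ = ↑p.1
    rw [mul_inv_eq_iff_eq_mul, mul_inv_eq_iff_eq_mul]
    exact eq_comm
  rw [Nat.card_congr e1, Nat.card_eq_fintype_card, Nat.card_eq_fintype_card,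
    Nat.card_eq_fintype_card, ← Fintype.card_prod, ← hb, rhs_eq_double_sum,
    Fintype.sum_prod_type]
  exact Finset.sum_congr rfl fun h₁ _ => Finset.sum_congr rfl fun h₂ _ => hfix (h₁, h₂)
end

section
/- Let G be a finite group and H ≤ G. A double coset HgH in H\G/H is self-inverse if and only if it contains an element x with x² ∈ H. -/
/-- A double coset `HgH` in `H\G/H` is self-inverse (equal to `Hg⁻¹H`) if and only
if it contains an element `x` with `x² ∈ H`. -/
theorem doset_selfInverse_iff_exists_sq_mem (G : Type*) [Group G] [Fintype G]
    (H : Subgroup G) (g : G) :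
    DoubleCoset.doubleCoset g (H : Set G) (H : Set G) = DoubleCoset.doubleCoset g⁻¹ (H : Set G) (H : Set G) ↔
      ∃ x ∈ DoubleCoset.doubleCoset g (H : Set G) (H : Set G), x ^ 2 ∈ H := by
  constructor
  · intro h
    have hg : g⁻¹ ∈ DoubleCoset.doubleCoset g (H : Set G) (H : Set G) := by
      rw [h]; exact DoubleCoset.mem_doubleCoset_self H H g⁻¹
    obtain ⟨a, ha, b, hb, hab⟩ := DoubleCoset.mem_doubleCoset.1 hg
    refine ⟨g * b, DoubleCoset.mem_doubleCoset.2 ⟨1, H.one_mem, b, hb, by group⟩, ?_⟩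
    have hx : g * b = a⁻¹ * g⁻¹ := by
      have : a⁻¹ * g⁻¹ = a⁻¹ * (a * g * b) := by rw [← hab]
      rw [this]; group
    have h2 : (g * b) ^ 2 = a⁻¹ * b := by
      rw [pow_two]; nth_rewrite 1 [hx]; group
    rw [h2]
    exact H.mul_mem (H.inv_mem ha) hb
  · rintro ⟨x, hx, hsq⟩
    have h1 : DoubleCoset.doubleCoset x (H : Set G) (H : Set G) = DoubleCoset.doubleCoset g (H : Set G) (H : Set G) :=
      DoubleCoset.doubleCoset_eq_of_mem hx
    have hinv : x⁻¹ ∈ DoubleCoset.doubleCoset g (H : Set G) (H : Set G) := by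
      rw [← h1]
      exact DoubleCoset.mem_doubleCoset.2 ⟨(x ^ 2)⁻¹, H.inv_mem hsq, 1, H.one_mem, by group⟩
    have h2 : DoubleCoset.doubleCoset x⁻¹ (H : Set G) (H : Set G) = DoubleCoset.doubleCoset g (H : Set G) (H : Set G) :=
      DoubleCoset.doubleCoset_eq_of_mem hinv
    have hginv : g⁻¹ ∈ DoubleCoset.doubleCoset x⁻¹ (H : Set G) (H : Set G) := by
      obtain ⟨a, ha, b, hb, hab⟩ := DoubleCoset.mem_doubleCoset.1 hx
      exact DoubleCoset.mem_doubleCoset.2 ⟨b, hb, a, ha, by rw [hab]; group⟩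
    rw [h2] at hginv
    exact (DoubleCoset.doubleCoset_eq_of_mem hginv).symm
end

section
/- For n ≡ 3 (mod 4), the number of self-inverse double cosets in Z_n\S_n/Z_n is exactly twice the number of self-inverse double cosets in D_n\S_n/D_n, where Z_n and D_n are the cyclic and dihedral subgroups of S_n of orders n and 2n respectively. -/
open DoubleCoset Subgroup

abbrev dcAux {G : Type*} [Group G] (Z : Subgroup G) (a : G) : Set G :=
  DoubleCoset.doubleCoset a (Z : Set G) (Z : Set G)

lemma dcAux_eq {G : Type*} [Group G] (Z : Subgroup G) {a b z z' : G} (hz : z ∈ Z) (hz' : z' ∈ Z)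
    (h : b = z * a * z') : dcAux Z b = dcAux Z a :=
  DoubleCoset.doubleCoset_eq_of_mem (DoubleCoset.mem_doubleCoset.mpr ⟨z, hz, z', hz', h⟩)

lemma dcAux_exists {G : Type*} [Group G] {Z : Subgroup G} {a b : G}
    (h : dcAux Z b = dcAux Z a) : ∃ z ∈ Z, ∃ z' ∈ Z, b = z * a * z' := by
  have hb : b ∈ dcAux Z a := by rw [← h]; exact DoubleCoset.mem_doubleCoset_self Z Z b
  exact DoubleCoset.mem_doubleCoset.mp hb

theorem abstract_selfinv_count {G : Type*} [Group G] [Finite G] (Z D : Subgroup G) (s : G)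
    (ε : G →* ℤˣ) (hZD : Z ≤ D) (hsD : s ∈ D) (hss : s * s = 1)
    (hcover : ∀ d ∈ D, d ∈ Z ∨ s * d ∈ Z) (hnorm : ∀ z ∈ Z, s * z * s ∈ Z)
    (hεZ : ∀ z ∈ Z, ε z = 1) (hεs : ε s = -1) :
    Nat.card {C : Set G | ∃ g : G, C = dcAux Z g ∧ C = dcAux Z g⁻¹} =
    2 * Nat.card {C : Set G | ∃ g : G, C = dcAux D g ∧ C = dcAux D g⁻¹} := by
  classical
  have hsinv : s⁻¹ = s := inv_eq_of_mul_eq_one_right hss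
  have hs2L : ∀ x : G, s * (s * x) = x := fun x => by rw [← mul_assoc, hss, one_mul]
  -- transport lemmas
  have hmulr : ∀ {a b : G}, dcAux Z b = dcAux Z a → dcAux Z (b * s) = dcAux Z (a * s) := by
    intro a b h
    obtain ⟨z, hz, z', hz', rfl⟩ := dcAux_exists h
    exact dcAux_eq Z hz (hnorm z' hz') (by simp [mul_assoc, hs2L])
  have hmull : ∀ {a b : G}, dcAux Z b = dcAux Z a → dcAux Z (s * b) = dcAux Z (s * a) := by
    intro a b h
    obtain ⟨z, hz, z', hz', rfl⟩ := dcAux_exists h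
    exact dcAux_eq Z (hnorm z hz) hz' (by simp [mul_assoc, hs2L])
  have hsand : ∀ {a b : G}, dcAux Z b = dcAux Z a → dcAux Z (s * b * s) = dcAux Z (s * a * s) := by
    intro a b h
    have h' := hmull (hmulr h)
    simpa [mul_assoc] using h'
  have hdinv : ∀ {a b : G}, dcAux Z b = dcAux Z a → dcAux Z b⁻¹ = dcAux Z a⁻¹ := by
    intro a b h
    obtain ⟨z, hz, z', hz', rfl⟩ := dcAux_exists h
    exact dcAux_eq Z (Z.inv_mem hz') (Z.inv_mem hz) (by simp [mul_assoc])
  have hsign : ∀ {a b : G}, dcAux Z b = dcAux Z a → ε b = ε a := by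
    intro a b h
    obtain ⟨z, hz, z', hz', rfl⟩ := dcAux_exists h
    simp [map_mul, hεZ z hz, hεZ z' hz']
  have hεinv : ∀ a : G, ε a⁻¹ = ε a := fun a => by
    rcases Int.units_eq_one_or (ε a) with h | h <;> simp [map_inv, h]
  have hεne : ∀ a : G, ε a ≠ -ε a := fun a => by
    rcases Int.units_eq_one_or (ε a) with h | h <;> rw [h] <;> decide
  have hεsg : ∀ a : G, ε (s * a) = -ε a := fun a => by rw [map_mul, hεs, neg_one_mul]
  have hεgs : ∀ a : G, ε (a * s) = -ε a := fun a => by rw [map_mul, hεs, mul_neg_one]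
  have hsub : ∀ a : G, dcAux Z a ⊆ dcAux D a := by
    intro a x hx
    obtain ⟨z, hz, z', hz', rfl⟩ := DoubleCoset.mem_doubleCoset.mp hx
    exact DoubleCoset.mem_doubleCoset.mpr ⟨z, hZD hz, z', hZD hz', rfl⟩
  -- the key fiber description
  have key : ∀ X : Set G, (∃ g : G, X = dcAux D g ∧ X = dcAux D g⁻¹) →
      ∃ C₁ C₂ : Set G, C₁ ≠ C₂ ∧ ∀ C : Set G,
        ((∃ g₀ : G, C = dcAux Z g₀ ∧ C = dcAux Z g₀⁻¹) ∧ C ⊆ X ↔ (C = C₁ ∨ C = C₂)) := by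
    rintro X ⟨g, hXg, hXg'⟩
    have e1 : (s * g * s) * s = s * g := by rw [mul_assoc, hss, mul_one]
    have e2 : (g * s) * s = g := by rw [mul_assoc, hss, mul_one]
    have e3 : (s * g)⁻¹ = g⁻¹ * s := by rw [mul_inv_rev, hsinv]
    have e4 : (g * s)⁻¹ = s * g⁻¹ := by rw [mul_inv_rev, hsinv]
    have e5 : (s * g * s)⁻¹ = s * g⁻¹ * s := by
      rw [mul_inv_rev, mul_inv_rev, hsinv, ← mul_assoc]
    have e7 : s * (s * g * s) * s = g := by simp [mul_assoc, hs2L, hss]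
    have e8 : s * (s * g * s) = g * s := by simp [mul_assoc, hs2L]
    -- memberships in X
    have gX : g ∈ X := by rw [hXg]; exact DoubleCoset.mem_doubleCoset_self D D g
    have sgX : s * g ∈ X := by
      rw [hXg]; exact DoubleCoset.mem_doubleCoset.mpr ⟨s, hsD, 1, D.one_mem, (mul_one _).symm⟩
    have gsX : g * s ∈ X := by
      rw [hXg]; exact DoubleCoset.mem_doubleCoset.mpr ⟨1, D.one_mem, s, hsD, by rw [one_mul]⟩
    have sgsX : s * g * s ∈ X := by
      rw [hXg]; exact DoubleCoset.mem_doubleCoset.mpr ⟨s, hsD, s, hsD, rfl⟩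
    have hXsub : ∀ h : G, h ∈ X → dcAux Z h ⊆ dcAux D g := by
      intro h hh
      have hd : dcAux D h = dcAux D g := DoubleCoset.doubleCoset_eq_of_mem (by rwa [hXg] at hh)
      rw [← hd]; exact hsub h
    have hXsub' : ∀ h : G, h ∈ X → dcAux Z h ⊆ X := by
      intro h hh
      rw [hXg]; exact hXsub h hh
    -- classification of Z-double cosets inside X
    have hmemX : ∀ h : G, h ∈ X → dcAux Z h = dcAux Z g ∨ dcAux Z h = dcAux Z (s * g) ∨
        dcAux Z h = dcAux Z (g * s) ∨ dcAux Z h = dcAux Z (s * g * s) := by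
      intro h hh
      rw [hXg] at hh
      obtain ⟨d, hd, d', hd', rfl⟩ := DoubleCoset.mem_doubleCoset.mp hh
      rcases hcover d hd with h1 | h1 <;> rcases hcover d' hd' with h2 | h2
      · exact Or.inl (dcAux_eq Z h1 h2 rfl)
      · exact Or.inr (Or.inr (Or.inl (dcAux_eq Z h1 h2 (by simp [mul_assoc, hs2L]))))
      · exact Or.inr (Or.inl (dcAux_eq Z (hnorm _ h1) h2 (by simp [mul_assoc, hs2L])))
      · exact Or.inr (Or.inr (Or.inr (dcAux_eq Z (hnorm _ h1) h2 (by simp [mul_assoc, hs2L]))))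
    -- the inverse coset of g
    have hginvX : g⁻¹ ∈ X := by rw [hXg']; exact DoubleCoset.mem_doubleCoset_self D D g⁻¹
    have hinv0 : dcAux Z g⁻¹ = dcAux Z g ∨ dcAux Z g⁻¹ = dcAux Z (s * g * s) := by
      rcases hmemX g⁻¹ hginvX with h | h | h | h
      · exact Or.inl h
      · exfalso
        refine hεne g ?_
        calc ε g = ε g⁻¹ := (hεinv g).symm
          _ = ε (s * g) := hsign h
          _ = -ε g := hεsg g
      · exfalso
        refine hεne g ?_
        calc ε g = ε g⁻¹ := (hεinv g).symm
          _ = ε (g * s) := hsign h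
          _ = -ε g := hεgs g
      · exact Or.inr h
    have hselfinv : ∀ (C : Set G) (h : G), (∃ g₀ : G, C = dcAux Z g₀ ∧ C = dcAux Z g₀⁻¹) →
        C = dcAux Z h → dcAux Z h⁻¹ = C := by
      rintro C h ⟨g₀, h1, h2⟩ hC
      have hh : dcAux Z h = dcAux Z g₀ := by rw [← hC, h1]
      rw [hdinv hh, ← h2]
    by_cases h03 : dcAux Z g = dcAux Z (s * g * s)
    · -- two Z-cosets in X
      have h12 : dcAux Z (g * s) = dcAux Z (s * g) := by
        have h' := hmulr h03
        rwa [e1] at h'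
      have hinvg : dcAux Z g⁻¹ = dcAux Z g := by
        rcases hinv0 with h | h
        · exact h
        · rw [h, ← h03]
      refine ⟨dcAux Z g, dcAux Z (s * g), ?_, ?_⟩
      · intro hEq
        exact hεne g ((hsign hEq).trans (hεsg g))
      · intro C
        constructor
        · rintro ⟨⟨g₀, hC1, hC2⟩, hCsub⟩
          have hg₀X : g₀ ∈ X := hCsub (by rw [hC1]; exact DoubleCoset.mem_doubleCoset_self Z Z g₀)
          rcases hmemX g₀ hg₀X with h | h | h | h
          · left; rw [hC1, h]
          · right; rw [hC1, h]
          · right; rw [hC1, h, h12]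
          · left; rw [hC1, h, ← h03]
        · rintro (rfl | rfl)
          · exact ⟨⟨g, rfl, hinvg.symm⟩, hXsub' g gX⟩
          · refine ⟨⟨s * g, rfl, ?_⟩, hXsub' (s * g) sgX⟩
            rw [e3, hmulr hinvg, h12]
    · rcases hinv0 with hinv | hinv
      · -- case II.a : candidates C₀ and C₃
        refine ⟨dcAux Z g, dcAux Z (s * g * s), h03, ?_⟩
        intro C
        constructor
        · rintro ⟨⟨g₀, hC1, hC2⟩, hCsub⟩
          have hg₀X : g₀ ∈ X := hCsub (by rw [hC1]; exact DoubleCoset.mem_doubleCoset_self Z Z g₀)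
          rcases hmemX g₀ hg₀X with h | h | h | h
          · left; rw [hC1, h]
          · exfalso
            have hA : dcAux Z ((s * g)⁻¹) = dcAux Z (s * g) := by
              rw [hselfinv C (s * g) ⟨g₀, hC1, hC2⟩ (by rw [hC1, h]), hC1, h]
            have hB : dcAux Z ((s * g)⁻¹) = dcAux Z (g * s) := by rw [e3]; exact hmulr hinv
            have h12 : dcAux Z (g * s) = dcAux Z (s * g) := by rw [← hB, hA]
            have h' := hmulr h12
            rw [e2] at h'
            exact h03 h'
          · exfalso
            have hA : dcAux Z ((g * s)⁻¹) = dcAux Z (g * s) := by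
              rw [hselfinv C (g * s) ⟨g₀, hC1, hC2⟩ (by rw [hC1, h]), hC1, h]
            have hB : dcAux Z ((g * s)⁻¹) = dcAux Z (s * g) := by rw [e4]; exact hmull hinv
            have h12 : dcAux Z (g * s) = dcAux Z (s * g) := by rw [← hA, hB]
            have h' := hmulr h12
            rw [e2] at h'
            exact h03 h'
          · right; rw [hC1, h]
        · rintro (rfl | rfl)
          · exact ⟨⟨g, rfl, hinv.symm⟩, hXsub' g gX⟩
          · refine ⟨⟨s * g * s, rfl, ?_⟩, hXsub' (s * g * s) sgsX⟩
            rw [e5]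
            exact (hsand hinv).symm
      · -- case II.b : candidates C₁ and C₂
        have h12ne : dcAux Z (s * g) ≠ dcAux Z (g * s) := by
          intro h
          have h' := hmulr h
          rw [e2] at h'
          exact h03 h'.symm
        refine ⟨dcAux Z (s * g), dcAux Z (g * s), h12ne, ?_⟩
        intro C
        constructor
        · rintro ⟨⟨g₀, hC1, hC2⟩, hCsub⟩
          have hg₀X : g₀ ∈ X := hCsub (by rw [hC1]; exact DoubleCoset.mem_doubleCoset_self Z Z g₀)
          rcases hmemX g₀ hg₀X with h | h | h | h
          · exfalso
            have hA : dcAux Z g⁻¹ = dcAux Z g := by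
              rw [hselfinv C g ⟨g₀, hC1, hC2⟩ (by rw [hC1, h]), hC1, h]
            exact h03 (by rw [← hA, hinv])
          · left; rw [hC1, h]
          · right; rw [hC1, h]
          · exfalso
            have hA : dcAux Z ((s * g * s)⁻¹) = dcAux Z (s * g * s) := by
              rw [hselfinv C (s * g * s) ⟨g₀, hC1, hC2⟩ (by rw [hC1, h]), hC1, h]
            have hB : dcAux Z ((s * g * s)⁻¹) = dcAux Z g := by
              rw [e5]
              have h' := hsand hinv
              rwa [e7] at h'
            exact h03 (by rw [← hB, hA])
        · rintro (rfl | rfl)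
          · refine ⟨⟨s * g, rfl, ?_⟩, hXsub' (s * g) sgX⟩
            rw [e3]
            have h' := hmulr hinv
            rw [e1] at h'
            exact h'.symm
          · refine ⟨⟨g * s, rfl, ?_⟩, hXsub' (g * s) gsX⟩
            rw [e4]
            have h' := hmull hinv
            rw [e8] at h'
            exact h'.symm
  -- counting
  set A := {C : Set G | ∃ g : G, C = dcAux Z g ∧ C = dcAux Z g⁻¹} with hA
  set B := {C : Set G | ∃ g : G, C = dcAux D g ∧ C = dcAux D g⁻¹} with hB
  have FmemB : ∀ a : ↥A, dcAux D (Exists.choose a.2) ∈ B := by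
    intro a
    obtain ⟨h1, h2⟩ := Exists.choose_spec a.2
    refine ⟨Exists.choose a.2, rfl, ?_⟩
    have : (Exists.choose a.2)⁻¹ ∈ dcAux D (Exists.choose a.2) := by
      apply hsub
      rw [← h1]
      have hmem : (Exists.choose a.2)⁻¹ ∈ dcAux Z (Exists.choose a.2)⁻¹ :=
        DoubleCoset.mem_doubleCoset_self Z Z _
      rwa [← h2] at hmem
    exact (DoubleCoset.doubleCoset_eq_of_mem this).symm
  let F : ↥A → ↥B := fun a => ⟨dcAux D (Exists.choose a.2), FmemB a⟩
  have Feq : ∀ (a : ↥A) (b : ↥B), F a = b ↔ (a : Set G) ⊆ (b : Set G) := by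
    intro a b
    have haC : (a : Set G) = dcAux Z (Exists.choose a.2) := (Exists.choose_spec a.2).1
    constructor
    · intro h
      have hv : dcAux D (Exists.choose a.2) = (b : Set G) := congrArg Subtype.val h
      rw [haC, ← hv]
      exact hsub _
    · intro hsubab
      obtain ⟨gb, hb1, _⟩ := b.2
      have hsubZ : dcAux Z (Exists.choose a.2) ⊆ (b : Set G) := by
        rw [← haC]; exact hsubab
      have hmem : Exists.choose a.2 ∈ (b : Set G) :=
        hsubZ (DoubleCoset.mem_doubleCoset_self Z Z _)
      apply Subtype.ext
      show dcAux D (Exists.choose a.2) = (b : Set G)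
      rw [hb1] at hmem ⊢
      exact DoubleCoset.doubleCoset_eq_of_mem hmem
  have hfib : ∀ b : ↥B, Nat.card {a : ↥A // F a = b} = 2 := by
    intro b
    obtain ⟨C₁, C₂, hne, hiff⟩ := key (b : Set G) b.2
    rw [Nat.card_eq_two_iff]
    have h1 := (hiff C₁).mpr (Or.inl rfl)
    have h2 := (hiff C₂).mpr (Or.inr rfl)
    refine ⟨⟨⟨C₁, h1.1⟩, (Feq _ _).mpr h1.2⟩, ⟨⟨C₂, h2.1⟩, (Feq _ _).mpr h2.2⟩, ?_, ?_⟩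
    · intro hEq
      exact hne (congrArg (fun x : {a : ↥A // F a = _} => ((x.1 : Set G))) hEq)
    · rw [Set.eq_univ_iff_forall]
      rintro ⟨⟨C, hCA⟩, hCb⟩
      have hCsub : C ⊆ (b : Set G) := (Feq ⟨C, hCA⟩ b).mp hCb
      rcases (hiff C).mp ⟨hCA, hCsub⟩ with h | h
      · exact Or.inl (Subtype.ext (Subtype.ext h))
      · exact Or.inr (Subtype.ext (Subtype.ext h))
  have fA : Fintype ↥A := Fintype.ofFinite _
  have fB : Fintype ↥B := Fintype.ofFinite _
  calc Nat.card ↥A = Fintype.card ↥A := Nat.card_eq_fintype_card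
    _ = Fintype.card (Σ b : ↥B, {a : ↥A // F a = b}) :=
        (Fintype.card_congr (Equiv.sigmaFiberEquiv F)).symm
    _ = ∑ b : ↥B, Fintype.card {a : ↥A // F a = b} := Fintype.card_sigma
    _ = ∑ _b : ↥B, 2 := by
        refine Finset.sum_congr rfl fun b _ => ?_
        rw [← Nat.card_eq_fintype_card, hfib b]
    _ = 2 * Fintype.card ↥B := by
        rw [Finset.sum_const, smul_eq_mul, Finset.card_univ, mul_comm]
    _ = 2 * Nat.card ↥B := by rw [Nat.card_eq_fintype_card]

/-- For `n ≡ 3 (mod 4)`, the number of self-inverse double cosets in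
`Z_n\S_n/Z_n` is twice the number of self-inverse double cosets in `D_n\S_n/D_n`,
where `Z_n` is generated by the rotation `x ↦ x + 1` of `ZMod n` and `D_n` by this
rotation together with the reflection `x ↦ -x`. -/
theorem selfInverse_cyclic_eq_two_mul_dihedral (n : ℕ) [NeZero n] (hn : n % 4 = 3) :
    (Nat.card {D : Set (Equiv.Perm (ZMod n)) | ∃ g : Equiv.Perm (ZMod n),
        D = DoubleCoset.doubleCoset g (Subgroup.zpowers (Equiv.addLeft (1 : ZMod n) : Equiv.Perm (ZMod n)) : Set (Equiv.Perm (ZMod n)))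
              (Subgroup.zpowers (Equiv.addLeft (1 : ZMod n) : Equiv.Perm (ZMod n)) : Set (Equiv.Perm (ZMod n))) ∧
        D = DoubleCoset.doubleCoset g⁻¹ (Subgroup.zpowers (Equiv.addLeft (1 : ZMod n) : Equiv.Perm (ZMod n)) : Set (Equiv.Perm (ZMod n)))
              (Subgroup.zpowers (Equiv.addLeft (1 : ZMod n) : Equiv.Perm (ZMod n)) : Set (Equiv.Perm (ZMod n)))}) =
    2 * Nat.card {D : Set (Equiv.Perm (ZMod n)) | ∃ g : Equiv.Perm (ZMod n),
        D = DoubleCoset.doubleCoset g (Subgroup.closure {(Equiv.addLeft (1 : ZMod n) : Equiv.Perm (ZMod n)), (Equiv.neg (ZMod n) : Equiv.Perm (ZMod n))} : Set (Equiv.Perm (ZMod n)))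
              (Subgroup.closure {(Equiv.addLeft (1 : ZMod n) : Equiv.Perm (ZMod n)), (Equiv.neg (ZMod n) : Equiv.Perm (ZMod n))} : Set (Equiv.Perm (ZMod n))) ∧
        D = DoubleCoset.doubleCoset g⁻¹ (Subgroup.closure {(Equiv.addLeft (1 : ZMod n) : Equiv.Perm (ZMod n)), (Equiv.neg (ZMod n) : Equiv.Perm (ZMod n))} : Set (Equiv.Perm (ZMod n)))
              (Subgroup.closure {(Equiv.addLeft (1 : ZMod n) : Equiv.Perm (ZMod n)), (Equiv.neg (ZMod n) : Equiv.Perm (ZMod n))} : Set (Equiv.Perm (ZMod n)))} := by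
  set r : Equiv.Perm (ZMod n) := Equiv.addLeft (1 : ZMod n) with hrdef
  set s : Equiv.Perm (ZMod n) := Equiv.neg (ZMod n) with hsdef
  have hodd : n % 2 = 1 := by omega
  have hss : s * s = 1 := by
    ext x
    simp [hsdef, Equiv.Perm.mul_apply]
  have hsinv : s⁻¹ = s := inv_eq_of_mul_eq_one_right hss
  have hs2L : ∀ x : Equiv.Perm (ZMod n), s * (s * x) = x := fun x => by
    rw [← mul_assoc, hss, one_mul]
  have hsrs : s * r * s = r⁻¹ := by
    have h1 : s * r * s * r = 1 := by
      ext x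
      simp [hsdef, hrdef, Equiv.Perm.mul_apply]
    exact eq_inv_of_mul_eq_one_left h1
  have hZD : zpowers r ≤ closure {r, s} :=
    zpowers_le.mpr (subset_closure (Set.mem_insert _ _))
  have hsD : s ∈ closure {r, s} := subset_closure (by simp)
  have hnorm : ∀ z ∈ zpowers r, s * z * s ∈ zpowers r := by
    intro z hz
    obtain ⟨k, hk⟩ := Subgroup.mem_zpowers_iff.mp hz
    subst hk
    refine ⟨-k, ?_⟩
    show r ^ (-k) = s * r ^ k * s
    rw [zpow_neg, ← inv_zpow, ← hsrs]
    conv_lhs => rw [show s * r * s = s * r * s⁻¹ by rw [hsinv]]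
    rw [conj_zpow, hsinv]
  have hcover : ∀ d ∈ closure {r, s}, d ∈ zpowers r ∨ s * d ∈ zpowers r := by
    intro d hd
    refine Subgroup.closure_induction ?_ ?_ ?_ ?_ hd
    · rintro x (rfl | rfl)
      · exact Or.inl (mem_zpowers r)
      · exact Or.inr (by rw [hss]; exact one_mem _)
    · exact Or.inl (one_mem _)
    · rintro x y hx hy (hx' | hx') (hy' | hy')
      · exact Or.inl (mul_mem hx' hy')
      · refine Or.inr ?_
        have e : s * (x * y) = (s * x * s) * (s * y) := by simp [mul_assoc, hs2L]
        rw [e]; exact mul_mem (hnorm _ hx') hy'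
      · refine Or.inr ?_
        have e : s * (x * y) = (s * x) * y := (mul_assoc s x y).symm
        rw [e]; exact mul_mem hx' hy'
      · refine Or.inl ?_
        have e : x * y = (s * (s * x) * s) * (s * y) := by simp [mul_assoc, hs2L]
        rw [e]; exact mul_mem (hnorm _ hx') hy'
    · rintro x hx (hx' | hx')
      · exact Or.inl (inv_mem hx')
      · refine Or.inr ?_
        have h1 : x⁻¹ * s ∈ zpowers r := by
          have h' := inv_mem hx'
          rwa [mul_inv_rev, hsinv] at h'
        have h2 := hnorm _ h1
        have e : s * (x⁻¹ * s) * s = s * x⁻¹ := by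
          simp [mul_assoc, hss]
        rwa [e] at h2
  -- r ^ n = 1
  have hpow : ∀ (m : ℕ) (x : ZMod n), (r ^ m) x = (m : ZMod n) + x := by
    intro m
    induction m with
    | zero => intro x; simp
    | succ k ih =>
      intro x
      rw [pow_succ, Equiv.Perm.mul_apply, ih]
      push_cast
      simp [hrdef, Equiv.addLeft]
      ring
  have hrn : r ^ n = 1 := by
    ext x
    rw [hpow n x]
    simp [ZMod.natCast_self]
  have hsignr : Equiv.Perm.sign r = 1 := by
    have h1 : (Equiv.Perm.sign r) ^ n = 1 := by rw [← map_pow, hrn, map_one]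
    rcases Int.units_eq_one_or (Equiv.Perm.sign r) with h | h
    · exact h
    · exfalso
      rw [h, (Nat.odd_iff.mpr hodd).neg_one_pow] at h1
      exact absurd h1 (by decide)
  have hεZ : ∀ z ∈ zpowers r, Equiv.Perm.sign z = 1 := by
    intro z hz
    obtain ⟨k, hk⟩ := Subgroup.mem_zpowers_iff.mp hz
    rw [← hk, map_zpow, hsignr, one_zpow]
  -- sign of s
  have h2n : 2 < n := by omega
  have hfact : Fact (2 < n) := ⟨h2n⟩
  have hs_ne : s ≠ 1 := by
    intro h
    have h1 : s 1 = 1 := by rw [h]; rfl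
    rw [hsdef] at h1
    simp only [Equiv.neg_apply] at h1
    exact ZMod.neg_one_ne_one h1
  have hord : orderOf s = 2 := orderOf_eq_prime (by rw [pow_two, hss]) hs_ne
  obtain ⟨m, hm⟩ := Equiv.Perm.cycleType_prime_order (by rw [hord]; exact Nat.prime_two)
  rw [hord] at hm
  have hsupp : s.support = ({0} : Finset (ZMod n))ᶜ := by
    ext x
    simp only [Equiv.Perm.mem_support, Finset.mem_compl, Finset.mem_singleton, hsdef,
      Equiv.neg_apply]
    apply not_congr
    constructor
    · intro h
      have h2 : (2 : ZMod n) * x = 0 := by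
        rw [two_mul]
        exact neg_eq_iff_add_eq_zero.mp h
      have hu : IsUnit (2 : ZMod n) := by
        have := (ZMod.isUnit_iff_coprime 2 n).mpr (Nat.coprime_two_left.mpr (Nat.odd_iff.mpr hodd))
        simpa using this
      exact (hu.mul_right_eq_zero).mp h2
    · rintro rfl; exact neg_zero
  have hcard : s.support.card = n - 1 := by
    rw [hsupp, Finset.card_compl, Finset.card_singleton, ZMod.card]
  have hsum := Equiv.Perm.sum_cycleType s
  rw [hm, Multiset.sum_replicate, hcard, smul_eq_mul] at hsum
  have hmodd : Odd (m + 1) := by rw [Nat.odd_iff]; omega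
  have hεs : Equiv.Perm.sign s = -1 := by
    rw [Equiv.Perm.sign_of_cycleType, hm, Multiset.sum_replicate, Multiset.card_replicate,
      smul_eq_mul]
    have hoddpow : Odd ((m + 1) * 2 + (m + 1)) := by
      obtain ⟨q, hq⟩ := hmodd
      exact ⟨3 * q + 1, by rw [hq]; ring⟩
    exact hoddpow.neg_one_pow
  exact abstract_selfinv_count (Subgroup.zpowers r) (Subgroup.closure {r, s}) s
    Equiv.Perm.sign hZD hsD hss hcover hnorm hεZ hεs
end

section
/- Let q be a power of 2 and ρ ≠ 0 in a field of characteristic 2. The square of the Jordan block J_k(ρ) is similar to the direct sum of Jordan blocks J_{⌈k/2⌉}(ρ²) ⊕ J_{⌊k/2⌋}(ρ²). -/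
/-- The `k×k` Jordan block with eigenvalue `ρ`. -/
def jordanBlock {F : Type*} [Field F] (k : ℕ) (ρ : F) : Matrix (Fin k) (Fin k) F :=
  Matrix.of fun i j => if (j : ℕ) = (i : ℕ) + 1 then 1 else if i = j then ρ else 0

lemma isConj_submatrix {n : Type*} [DecidableEq n] [Fintype n] {α : Type*} [CommRing α]
    (A : Matrix n n α) (g : n ≃ n) : IsConj A (A.submatrix g g) := by
  refine ⟨⟨g.toPEquiv.toMatrix, g.symm.toPEquiv.toMatrix, ?_, ?_⟩, ?_⟩
  · rw [← PEquiv.toMatrix_trans, ← Equiv.toPEquiv_trans, Equiv.self_trans_symm,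
      Equiv.toPEquiv_refl, PEquiv.toMatrix_refl]
  · rw [← PEquiv.toMatrix_trans, ← Equiv.toPEquiv_trans, Equiv.symm_trans_self,
      Equiv.toPEquiv_refl, PEquiv.toMatrix_refl]
  · show g.toPEquiv.toMatrix * A = A.submatrix g g * g.toPEquiv.toMatrix
    rw [PEquiv.toMatrix_toPEquiv_mul, PEquiv.mul_toMatrix_toPEquiv]
    ext i j
    simp [Matrix.submatrix_apply]

lemma jordanBlock_sq_apply {F : Type*} [Field F] [CharP F 2] (k : ℕ) (ρ : F)
    (i j : Fin k) :
    (jordanBlock k ρ ^ 2) i j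
      = if (j : ℕ) = (i : ℕ) + 2 then 1 else if (i : ℕ) = (j : ℕ) then ρ ^ 2 else 0 := by
  classical
  have two : (2 : F) = 0 := by
    have := CharP.cast_eq_zero F 2; exact_mod_cast this
  have hik := i.isLt
  have hjk := j.isLt
  have key : ∀ l : Fin k, jordanBlock k ρ i l * jordanBlock k ρ l j
      = (if (l : ℕ) = (i : ℕ) + 1 then jordanBlock k ρ l j else 0)
        + (if l = i then ρ * jordanBlock k ρ l j else 0) := by
    intro l
    by_cases h1 : (l : ℕ) = (i : ℕ) + 1
    · have h2 : l ≠ i := by intro e; rw [e] at h1; omega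
      simp [jordanBlock, h1, h2, (by omega : i ≠ l)]
    · by_cases h2 : l = i
      · subst h2; simp [jordanBlock, h1]
      · simp [jordanBlock, h1, h2, Ne.symm h2]
  rw [pow_two, Matrix.mul_apply]
  rw [Finset.sum_congr rfl fun l _ => key l, Finset.sum_add_distrib]
  have hB : ∑ l : Fin k, (if l = i then ρ * jordanBlock k ρ l j else 0)
      = ρ * jordanBlock k ρ i j := by
    simp
  rw [hB]
  by_cases h1 : (i : ℕ) + 1 < k
  · have hA : ∑ l : Fin k, (if (l : ℕ) = (i : ℕ) + 1 then jordanBlock k ρ l j else 0)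
        = jordanBlock k ρ ⟨(i : ℕ) + 1, h1⟩ j := by
      rw [show (∑ l : Fin k, (if (l : ℕ) = (i : ℕ) + 1 then jordanBlock k ρ l j else 0))
          = ∑ l : Fin k, (if l = ⟨(i : ℕ) + 1, h1⟩ then jordanBlock k ρ l j else 0) from
        Finset.sum_congr rfl fun l _ => by
          congr 1
          simp [Fin.ext_iff]]
      simp
    rw [hA]
    simp only [jordanBlock, Matrix.of_apply]
    have e1 : ((⟨(i : ℕ) + 1, h1⟩ : Fin k) = j) ↔ ((j : ℕ) = (i : ℕ) + 1) := by
      simp [Fin.ext_iff, eq_comm]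
    have e2 : (i = j) ↔ ((i : ℕ) = (j : ℕ)) := Fin.ext_iff
    simp only [e1, e2]
    split_ifs <;> first | omega | ring1 | linear_combination ρ * two
  · have hA : ∑ l : Fin k, (if (l : ℕ) = (i : ℕ) + 1 then jordanBlock k ρ l j else 0)
        = 0 := by
      apply Finset.sum_eq_zero
      intro l _
      have := l.isLt
      have : ¬ ((l : ℕ) = (i : ℕ) + 1) := by omega
      simp [this]
    rw [hA, zero_add]
    simp only [jordanBlock, Matrix.of_apply, Fin.ext_iff]
    split_ifs <;> first | omega | ring1

/-- The parity interleaving equivalence. -/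
noncomputable def parityEquiv (k : ℕ) (h : (k + 1) / 2 + k / 2 = k) :
    Fin ((k + 1) / 2) ⊕ Fin (k / 2) ≃ Fin k :=
  Equiv.ofBijective
    (fun x => Sum.elim (fun i : Fin ((k+1)/2) => (⟨2 * i, by omega⟩ : Fin k))
      (fun j : Fin (k/2) => (⟨2 * j + 1, by omega⟩ : Fin k)) x)
    (by
      rw [Fintype.bijective_iff_injective_and_card]
      constructor
      · rintro (a | a) (b | b) hab <;> simp [Fin.ext_iff] at hab ⊢ <;> omega
      · simp [h])

/-- Over a field of characteristic `2`, the square of the Jordan block `J_k(ρ)`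
(`ρ ≠ 0`) is similar to `J_{⌈k/2⌉}(ρ²) ⊕ J_{⌊k/2⌋}(ρ²)`. -/
theorem jordanBlock_sq_isConj_char_two (F : Type*) [Field F] [CharP F 2]
    (k : ℕ) (ρ : F) (hρ : ρ ≠ 0) (h : (k + 1) / 2 + k / 2 = k) :
    IsConj ((jordanBlock k ρ) ^ 2)
      ((Matrix.reindex (finSumFinEquiv.trans (finCongr h)) (finSumFinEquiv.trans (finCongr h)))
        (Matrix.fromBlocks (jordanBlock ((k + 1) / 2) (ρ ^ 2)) 0 0
          (jordanBlock (k / 2) (ρ ^ 2)))) := by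
  classical
  set e : Fin ((k+1)/2) ⊕ Fin (k/2) ≃ Fin k := finSumFinEquiv.trans (finCongr h) with he
  set fE : Fin ((k+1)/2) ⊕ Fin (k/2) ≃ Fin k := parityEquiv k h with hfE
  set g : Fin k ≃ Fin k := e.symm.trans fE with hg
  have key : (Matrix.reindex e e
        (Matrix.fromBlocks (jordanBlock ((k + 1) / 2) (ρ ^ 2)) 0 0
          (jordanBlock (k / 2) (ρ ^ 2))))
      = (jordanBlock k ρ ^ 2).submatrix g g := by
    ext i j
    rw [Matrix.reindex_apply, Matrix.submatrix_apply, Matrix.submatrix_apply,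
      jordanBlock_sq_apply]
    have hgi : g i = fE (e.symm i) := rfl
    have hgj : g j = fE (e.symm j) := rfl
    rw [hgi, hgj]
    rcases hx : e.symm i with a | a <;> rcases hy : e.symm j with b | b <;>
      simp only [Matrix.fromBlocks_apply₁₁, Matrix.fromBlocks_apply₁₂,
        Matrix.fromBlocks_apply₂₁, Matrix.fromBlocks_apply₂₂, Matrix.zero_apply,
        jordanBlock, Matrix.of_apply, hfE, parityEquiv, Equiv.ofBijective_apply,
        Sum.elim_inl, Sum.elim_inr, Fin.ext_iff] <;>
      split_ifs <;> first | rfl | omega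
  rw [key]
  exact isConj_submatrix _ g
end

section
/- In B_n, an element of the conjugacy class C_{λ,μ} has a square root only if every even part of λ has even multiplicity and every part of μ has even multiplicity; equivalently, Sq(C_{λ,μ}) = 0 if some m_{2k} (multiplicity of 2k in λ) or some m̄_k (multiplicity of k in μ) is odd. -/
/-- The central flip of the `2n` points `Fin n × ZMod 2`. -/
def flipPerm (n : ℕ) : Equiv.Perm (Fin n × ZMod 2) :=
  Equiv.prodCongr (Equiv.refl (Fin n)) (Equiv.addLeft (1 : ZMod 2))

/-- The hyperoctahedral group `B_n`, realized as the centralizer of the flip. -/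
def hyperoctahedral (n : ℕ) : Subgroup (Equiv.Perm (Fin n × ZMod 2)) :=
  Subgroup.centralizer {flipPerm n}

/-- A finset closed under a fixed-point-free involution has even cardinality. -/
lemma even_card_of_fpf_invol {γ : Type*} [DecidableEq γ] (f : γ → γ) :
    ∀ (S : Finset γ), (∀ x ∈ S, f x ∈ S) → (∀ x ∈ S, f (f x) = x) →
      (∀ x ∈ S, f x ≠ x) → Even S.card := by
  intro S
  induction S using Finset.strongInduction with
  | _ S ih =>
    intro hcl hinv hne
    rcases S.eq_empty_or_nonempty with rfl | ⟨x, hx⟩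
    · simp
    · have hfx : f x ∈ S := hcl x hx
      have hxfx : x ≠ f x := fun e => hne x hx e.symm
      have hpair : ({x, f x} : Finset γ) ⊆ S := by
        intro y hy
        rcases Finset.mem_insert.mp hy with rfl | hy
        · exact hx
        · rw [Finset.mem_singleton.mp hy]; exact hfx
      have hss : S \ {x, f x} ⊂ S :=
        Finset.sdiff_ssubset hpair ⟨x, Finset.mem_insert_self _ _⟩
      have hmem : ∀ y, y ∈ S \ {x, f x} ↔ y ∈ S ∧ y ≠ x ∧ y ≠ f x := by
        intro y
        simp [Finset.mem_sdiff, Finset.mem_insert, not_or]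
      have heven : Even (S \ {x, f x}).card := by
        refine ih _ hss ?_ ?_ ?_
        · intro y hy
          obtain ⟨hyS, hy1, hy2⟩ := (hmem y).mp hy
          refine (hmem _).mpr ⟨hcl y hyS, ?_, ?_⟩
          · intro e
            exact hy2 (by rw [← hinv y hyS, e])
          · intro e
            have := hinv y hyS
            rw [e, hinv x hx] at this
            exact hy1 this.symm
        · intro y hy; exact hinv y ((hmem y).mp hy).1
        · intro y hy; exact hne y ((hmem y).mp hy).1
      have hcard : S.card = (S \ {x, f x}).card + 2 := by
        have h2 : ({x, f x} : Finset γ).card = 2 := Finset.card_pair hxfx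
        have h3 := Finset.card_sdiff_of_subset hpair
        have hle := Finset.card_le_card hpair
        omega
      rw [hcard]
      exact heven.add even_two

/-- Core lemma: an even-support cycle factor of `h ^ 2` cannot commute with `h`. -/
lemma no_comm_even_cycle {α : Type*} [Fintype α] [DecidableEq α] {h c : Equiv.Perm α}
    (hc : c ∈ (h ^ 2).cycleFactorsFinset) (he : Even c.support.card)
    (hcm : h * c = c * h) : False := by
  obtain ⟨hcyc, hsupp⟩ := Equiv.Perm.mem_cycleFactorsFinset_iff.mp hc
  obtain ⟨x, hx⟩ := hcyc.nonempty_support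
  have hgx : (h ^ 2) x ≠ x := by
    rw [← hsupp x hx]; exact Equiv.Perm.mem_support.mp hx
  have hhx : h x ≠ x := by
    intro e
    apply hgx
    rw [pow_two, Equiv.Perm.mul_apply, e, e]
  have hinv : ∀ y, y ∈ c.support → h y ∈ c.support := by
    intro y hy
    rw [Equiv.Perm.mem_support] at hy ⊢
    have hcy : c (h y) = h (c y) := by
      have := congrArg (fun p => p y) hcm.symm
      simpa [Equiv.Perm.mul_apply] using this
    rw [hcy]
    exact fun e => hy (h.injective e)
  have hkey : ∀ i : ℕ, (h ^ i) x ∈ c.support := by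
    intro i
    induction i with
    | zero => simpa using hx
    | succ i ihi =>
        rw [pow_succ', Equiv.Perm.mul_apply]
        exact hinv _ ihi
  have supp_eq : (h.cycleOf x).support = c.support := by
    apply Finset.Subset.antisymm
    · intro y hy
      rw [Equiv.Perm.mem_support_cycleOf_iff] at hy
      obtain ⟨i, _, rfl⟩ := hy.1.exists_pow_eq'
      exact hkey i
    · intro y hy
      have hceq : c = (h ^ 2).cycleOf x := Equiv.Perm.cycle_is_cycleOf hx hc
      rw [hceq] at hy
      rw [Equiv.Perm.mem_support_cycleOf_iff] at hy ⊢
      obtain ⟨i, _, rfl⟩ := hy.1.exists_pow_eq'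
      refine ⟨⟨((2 * i : ℕ) : ℤ), ?_⟩, Equiv.Perm.mem_support.mpr hhx⟩
      rw [zpow_natCast, pow_mul]
  have hdcyc : (h.cycleOf x).IsCycle := Equiv.Perm.isCycle_cycleOf h hhx
  have hd2eq : h.cycleOf x ^ 2 = c := by
    ext y
    rw [pow_two, Equiv.Perm.mul_apply]
    by_cases hy : y ∈ c.support
    · have hy' : y ∈ (h.cycleOf x).support := by rw [supp_eq]; exact hy
      have hsc : h.SameCycle x y := (Equiv.Perm.mem_support_cycleOf_iff.mp hy').1
      have e1 : h.cycleOf x y = h y := by rw [Equiv.Perm.cycleOf_apply, if_pos hsc]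
      have hy2 : h y ∈ (h.cycleOf x).support := by rw [supp_eq]; exact hinv y hy
      have hsc2 : h.SameCycle x (h y) := (Equiv.Perm.mem_support_cycleOf_iff.mp hy2).1
      have e2 : h.cycleOf x (h y) = h (h y) := by rw [Equiv.Perm.cycleOf_apply, if_pos hsc2]
      rw [e1, e2, hsupp y hy, pow_two, Equiv.Perm.mul_apply]
    · have hy' : y ∉ (h.cycleOf x).support := by rw [supp_eq]; exact hy
      have e1 : h.cycleOf x y = y := Equiv.Perm.notMem_support.mp hy'
      rw [e1, e1, Equiv.Perm.notMem_support.mp hy]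
  have hb2 : 2 ≤ c.support.card := hcyc.two_le_card_support
  have ho1 : orderOf (h.cycleOf x) = c.support.card := by
    rw [hdcyc.orderOf, supp_eq]
  have ho2 : orderOf c = c.support.card := hcyc.orderOf
  have ho3 : orderOf (h.cycleOf x ^ 2) =
      orderOf (h.cycleOf x) / Nat.gcd (orderOf (h.cycleOf x)) 2 := orderOf_pow _
  rw [hd2eq, ho1, ho2] at ho3
  obtain ⟨t, ht⟩ := he
  have hgcd : Nat.gcd c.support.card 2 = 2 := by
    rw [Nat.gcd_comm]
    exact Nat.gcd_eq_left ⟨t, by omega⟩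
  rw [hgcd] at ho3
  omega

lemma flip_mul_flip (n : ℕ) : flipPerm n * flipPerm n = 1 := by
  ext x
  · simp [flipPerm]
  · simp [flipPerm]
    change (1 : ZMod 2) + ((1 : ZMod 2) + x.2) = x.2
    rw [← add_assoc, show (1 : ZMod 2) + 1 = 0 by decide, zero_add]

lemma flip_ne (n : ℕ) (x : Fin n × ZMod 2) : flipPerm n x ≠ x := by
  intro e
  have h1 : (1 : ZMod 2) + x.2 = x.2 := congrArg Prod.snd e
  have h01 : (1 : ZMod 2) ≠ 0 := by decide
  have h2 : (1 : ZMod 2) + x.2 = 0 + x.2 := by rw [zero_add]; exact h1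
  exact h01 (add_right_cancel h2)

lemma conj_comm_helper {G : Type*} [Group G] {t p : G} (hc : t * p = p * t) (c : G) :
    t * (p * c * p⁻¹) * t = p * (t * c * t) * p⁻¹ := by
  have h1 : Commute t p := hc
  have h2 : t * p⁻¹ = p⁻¹ * t := h1.inv_right.eq
  calc t * (p * c * p⁻¹) * t = (t * p) * c * (p⁻¹ * t) := by simp only [mul_assoc]
    _ = (p * t) * c * (t * p⁻¹) := by rw [h1.eq, ← h2]
    _ = p * (t * c * t) * p⁻¹ := by simp only [mul_assoc]

lemma conj_eq_imp_comm {G : Type*} [Group G] {p c : G} (e : p * c * p⁻¹ = c) :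
    p * c = c * p := by
  have h := congrArg (fun z => z * p) e
  simpa [mul_assoc] using h

noncomputable def permOrd {α : Type*} [Fintype α] [DecidableEq α] (c : Equiv.Perm α) : ℕ :=
  (Fintype.equivFin (Equiv.Perm α) c : ℕ)

lemma permOrd_injective {α : Type*} [Fintype α] [DecidableEq α] :
    Function.Injective (permOrd (α := α)) := by
  intro a b e
  exact (Fintype.equivFin (Equiv.Perm α)).injective (Fin.val_injective e)

/-- An element of `B_n` in the conjugacy class `C_{λ,μ}` has no square root in
`B_n` if some even part `2k` of `λ` or some part `k` of `μ` has odd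
multiplicity. -/
theorem hyperoctahedral_no_sqrt (n : ℕ) (lam mu : Multiset ℕ)
    (hparts : ∀ k ∈ lam + mu, 1 ≤ k) (hsum : lam.sum + mu.sum = n)
    (g : Equiv.Perm (Fin n × ZMod 2)) (hg : g ∈ hyperoctahedral n)
    (hmu : Multiset.map (fun c => c.support.card / 2)
        (g.cycleFactorsFinset.filter
          (fun c => flipPerm n * c * flipPerm n = c)).val = mu)
    (hlam2 : Multiset.map (fun c => c.support.card)
        (g.cycleFactorsFinset.filter
          (fun c => flipPerm n * c * flipPerm n ≠ c)).val =
        lam.filter (fun k => 2 ≤ k) + lam.filter (fun k => 2 ≤ k))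
    (hlam1 : Nat.card {x : Fin n × ZMod 2 | g x = x} = 2 * lam.count 1)
    (hodd : (∃ k, 1 ≤ k ∧ Odd (lam.count (2 * k))) ∨ ∃ k, 1 ≤ k ∧ Odd (mu.count k)) :
    ∀ h ∈ hyperoctahedral n, h ^ 2 ≠ g := by
  intro h hh heq
  subst heq
  set τ := flipPerm n with hτdef
  have hτ2 : τ * τ = 1 := flip_mul_flip n
  have hτi : τ⁻¹ = τ := inv_eq_of_mul_eq_one_right hτ2
  have hhτ : h * τ = τ * h := Subgroup.mem_centralizer_singleton_iff.mp hh
  have cτh : Commute τ h := hhτ.symm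
  have cτh2 : τ * h ^ 2 = h ^ 2 * τ := (cτh.pow_right 2).eq
  have hββ : ∀ c : Equiv.Perm (Fin n × ZMod 2), τ * (τ * c * τ) * τ = c := by
    intro c
    calc τ * (τ * c * τ) * τ = (τ * τ) * c * (τ * τ) := by simp only [mul_assoc]
      _ = c := by rw [hτ2, one_mul, mul_one]
  -- cycle factors commute with h ^ 2
  have hcomm : ∀ c ∈ (h ^ 2).cycleFactorsFinset, h ^ 2 * c = c * h ^ 2 := by
    intro c hc
    have hd := Equiv.Perm.disjoint_mul_inv_of_mem_cycleFactorsFinset hc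
    have h1 : Commute c (h ^ 2 * c⁻¹) := hd.commute.symm
    have h2 : Commute c (h ^ 2) := by
      have h3 := h1.mul_right (Commute.refl c)
      rwa [inv_mul_cancel_right] at h3
    exact h2.eq.symm
  -- conjugation by elements commuting with h^2 preserves cycle factors
  have hconjF : ∀ p : Equiv.Perm (Fin n × ZMod 2), p * h ^ 2 = h ^ 2 * p →
      ∀ c ∈ (h ^ 2).cycleFactorsFinset, p * c * p⁻¹ ∈ (h ^ 2).cycleFactorsFinset := by
    intro p hp c hc
    have h1 : p * h ^ 2 * p⁻¹ = h ^ 2 := by rw [hp, mul_inv_cancel_right]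
    have h2 := (Equiv.Perm.mem_cycleFactorsFinset_conj (h ^ 2) p c).mpr hc
    rwa [h1] at h2
  have hαα : ∀ c ∈ (h ^ 2).cycleFactorsFinset, h * (h * c * h⁻¹) * h⁻¹ = c := by
    intro c hc
    have e : h * (h * c * h⁻¹) * h⁻¹ = h ^ 2 * c * (h ^ 2)⁻¹ := by
      rw [pow_two, mul_inv_rev]
      simp only [mul_assoc]
    rw [e, hcomm c hc, mul_inv_cancel_right]
  have hαβswap : ∀ c : Equiv.Perm (Fin n × ZMod 2),
      τ * (h * c * h⁻¹) * τ = h * (τ * c * τ) * h⁻¹ :=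
    conj_comm_helper cτh.eq
  have hcardτ : ∀ c : Equiv.Perm (Fin n × ZMod 2),
      (τ * c * τ).support.card = c.support.card := by
    intro c
    have := Equiv.Perm.card_support_conj (σ := τ) (τ := c)
    rwa [hτi] at this
  rcases hodd with ⟨k, hk1, hodd⟩ | ⟨k, hk1, hodd⟩
  · -- lambda case
    set N' : Finset (Equiv.Perm (Fin n × ZMod 2)) :=
      ((h ^ 2).cycleFactorsFinset.filter (fun c => τ * c * τ ≠ c)).filter
        (fun c => 2 * k = c.support.card) with hN'def
    have hmemN' : ∀ c, c ∈ N' ↔ (c ∈ (h ^ 2).cycleFactorsFinset ∧ τ * c * τ ≠ c)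
        ∧ 2 * k = c.support.card := by
      intro c
      rw [hN'def, Finset.mem_filter, Finset.mem_filter]
    have hcnt : Multiset.count (2 * k) (Multiset.map (fun c => c.support.card)
        ((h ^ 2).cycleFactorsFinset.filter (fun c => τ * c * τ ≠ c)).val)
        = 2 * Multiset.count (2 * k) lam := by
      rw [hlam2, Multiset.count_add, Multiset.count_filter, if_pos (by omega : 2 ≤ 2 * k)]
      ring
    have hN'card : N'.card = 2 * Multiset.count (2 * k) lam := by
      rw [← hcnt, Multiset.count_map]
      rfl
    -- membership preserved under the two conjugations
    have hτN : ∀ c ∈ N', τ * c * τ ∈ N' := by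
      intro c hc
      obtain ⟨⟨hcF, hcns⟩, hck⟩ := (hmemN' c).mp hc
      refine (hmemN' _).mpr ⟨⟨?_, ?_⟩, ?_⟩
      · have h1 := hconjF τ cτh2 c hcF
        rwa [hτi] at h1
      · intro e
        rw [hββ c] at e
        exact hcns e.symm
      · rw [hcardτ c]; exact hck
    have hαN : ∀ c ∈ N', h * c * h⁻¹ ∈ N' := by
      intro c hc
      obtain ⟨⟨hcF, hcns⟩, hck⟩ := (hmemN' c).mp hc
      refine (hmemN' _).mpr ⟨⟨?_, ?_⟩, ?_⟩
      · exact hconjF h (by group) c hcF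
      · intro e
        rw [hαβswap c] at e
        have e2 : h * (τ * c * τ) = h * c := by
          have := congrArg (fun z => z * h) e
          simpa [mul_assoc] using this
        exact hcns (mul_left_cancel e2)
      · rw [Equiv.Perm.card_support_conj]; exact hck
    have hαfix : ∀ c ∈ N', h * c * h⁻¹ ≠ c := by
      intro c hc e
      obtain ⟨⟨hcF, _⟩, hck⟩ := (hmemN' c).mp hc
      exact no_comm_even_cycle hcF ⟨k, by omega⟩ (conj_eq_imp_comm e)
    have hαβne : ∀ c ∈ N', h * c * h⁻¹ ≠ τ * c * τ := by
      intro c hc e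
      obtain ⟨⟨hcF, _⟩, hck⟩ := (hmemN' c).mp hc
      have e2 : (τ * h) * c * (τ * h)⁻¹ = c := by
        rw [mul_inv_rev, hτi]
        calc τ * h * c * (h⁻¹ * τ) = τ * (h * c * h⁻¹) * τ := by simp only [mul_assoc]
          _ = τ * (τ * c * τ) * τ := by rw [e]
          _ = c := hββ c
      have hsq : (τ * h) ^ 2 = h ^ 2 := by
        calc (τ * h) ^ 2 = τ * (h * τ) * h := by rw [pow_two]; simp only [mul_assoc]
          _ = (τ * τ) * (h * h) := by rw [hhτ]; simp only [mul_assoc]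
          _ = h ^ 2 := by rw [hτ2, one_mul, pow_two]
      have hcF' : c ∈ ((τ * h) ^ 2).cycleFactorsFinset := by rw [hsq]; exact hcF
      exact no_comm_even_cycle hcF' ⟨k, by omega⟩ (conj_eq_imp_comm e2)
    -- the "smaller half" of the tau-pairing
    set U : Finset (Equiv.Perm (Fin n × ZMod 2)) :=
      N'.filter (fun c => permOrd c < permOrd (τ * c * τ)) with hUdef
    have hmemU : ∀ c, c ∈ U ↔ c ∈ N' ∧ permOrd c < permOrd (τ * c * τ) := by
      intro c; rw [hUdef, Finset.mem_filter]
    have hNU : N'.card = U.card + (N'.filter (fun c => ¬ permOrd c < permOrd (τ * c * τ))).card :=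
      (Finset.card_filter_add_card_filter_not _).symm
    have hVU : (N'.filter (fun c => ¬ permOrd c < permOrd (τ * c * τ))).card = U.card := by
      apply Finset.card_bij (fun c _ => τ * c * τ)
      · intro a ha
        obtain ⟨haN, halt⟩ := Finset.mem_filter.mp ha
        have hans : τ * a * τ ≠ a := ((hmemN' a).mp haN).1.2
        refine (hmemU _).mpr ⟨hτN a haN, ?_⟩
        rw [hββ a]
        exact lt_of_le_of_ne (not_lt.mp halt) (fun e => hans (permOrd_injective e))
      · intro a1 ha1 a2 ha2 e
        have := congrArg (fun z => τ * z * τ) e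
        simpa [hββ] using this
      · intro b hb
        obtain ⟨hbN, hblt⟩ := (hmemU b).mp hb
        refine ⟨τ * b * τ, ?_, hββ b⟩
        refine Finset.mem_filter.mpr ⟨hτN b hbN, ?_⟩
        rw [hββ b]
        exact not_lt.mpr (le_of_lt hblt)
    have hUcard : N'.card = 2 * U.card := by omega
    have hUodd : Odd U.card := by
      obtain ⟨m, hm⟩ := hodd
      exact ⟨m, by omega⟩
    -- fixed-point-free involution on U
    have hδ := even_card_of_fpf_invol
      (fun c => if permOrd (h * c * h⁻¹) < permOrd (τ * (h * c * h⁻¹) * τ)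
        then h * c * h⁻¹ else τ * (h * c * h⁻¹) * τ) U ?_ ?_ ?_
    · rw [← Nat.not_odd_iff_even] at hδ
      exact hδ hUodd
    · -- closure
      intro c hc
      obtain ⟨hcN, hclt⟩ := (hmemU c).mp hc
      by_cases hcase : permOrd (h * c * h⁻¹) < permOrd (τ * (h * c * h⁻¹) * τ)
      · rw [if_pos hcase]
        exact (hmemU _).mpr ⟨hαN c hcN, hcase⟩
      · rw [if_neg hcase]
        have haN : h * c * h⁻¹ ∈ N' := hαN c hcN
        have hans : τ * (h * c * h⁻¹) * τ ≠ h * c * h⁻¹ := ((hmemN' _).mp haN).1.2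
        refine (hmemU _).mpr ⟨hτN _ haN, ?_⟩
        rw [hββ]
        exact lt_of_le_of_ne (not_lt.mp hcase) (fun e => hans (permOrd_injective e))
    · -- involution
      intro c hc
      obtain ⟨hcN, hclt⟩ := (hmemU c).mp hc
      have hcF : c ∈ (h ^ 2).cycleFactorsFinset := ((hmemN' c).mp hcN).1.1
      by_cases hcase : permOrd (h * c * h⁻¹) < permOrd (τ * (h * c * h⁻¹) * τ)
      · rw [if_pos hcase, hαα c hcF, if_pos hclt]
      · rw [if_neg hcase, ← hαβswap (h * c * h⁻¹), hαα c hcF, hββ c,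
          if_neg (not_lt.mpr (le_of_lt hclt))]
    · -- no fixed points
      intro c hc e
      obtain ⟨hcN, hclt⟩ := (hmemU c).mp hc
      by_cases hcase : permOrd (h * c * h⁻¹) < permOrd (τ * (h * c * h⁻¹) * τ)
      · rw [if_pos hcase] at e
        exact hαfix c hcN e
      · rw [if_neg hcase] at e
        have e2 : h * c * h⁻¹ = τ * c * τ := by
          have := congrArg (fun z => τ * z * τ) e
          simpa [hββ] using this
        exact hαβne c hcN e2
  · -- mu case
    set S' : Finset (Equiv.Perm (Fin n × ZMod 2)) :=
      ((h ^ 2).cycleFactorsFinset.filter (fun c => τ * c * τ = c)).filter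
        (fun c => k = c.support.card / 2) with hS'def
    have hmemS' : ∀ c, c ∈ S' ↔ (c ∈ (h ^ 2).cycleFactorsFinset ∧ τ * c * τ = c)
        ∧ k = c.support.card / 2 := by
      intro c
      rw [hS'def, Finset.mem_filter, Finset.mem_filter]
    have hS'card : S'.card = Multiset.count k mu := by
      rw [← hmu, Multiset.count_map]
      rfl
    have hδ := even_card_of_fpf_invol (fun c => h * c * h⁻¹) S' ?_ ?_ ?_
    · rw [← Nat.not_odd_iff_even] at hδ
      rw [hS'card] at hδ
      exact hδ hodd
    · -- closure
      intro c hc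
      obtain ⟨⟨hcF, hcst⟩, hck⟩ := (hmemS' c).mp hc
      refine (hmemS' _).mpr ⟨⟨hconjF h (by group) c hcF, ?_⟩, ?_⟩
      · rw [hαβswap c, hcst]
      · rw [Equiv.Perm.card_support_conj]; exact hck
    · -- involution
      intro c hc
      exact hαα c ((hmemS' c).mp hc).1.1
    · -- no fixed points
      intro c hc e
      obtain ⟨⟨hcF, hcst⟩, hck⟩ := (hmemS' c).mp hc
      have hcτ : τ * c = c * τ := by
        calc τ * c = τ * c * (τ * τ) := by rw [hτ2, mul_one]
          _ = (τ * c * τ) * τ := by simp only [mul_assoc]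
          _ = c * τ := by rw [hcst]
      have hsupeven : Even c.support.card := by
        apply even_card_of_fpf_invol (fun x => τ x) c.support
        · intro x hx
          rw [Equiv.Perm.mem_support] at hx ⊢
          have hcτx : c (τ x) = τ (c x) := by
            have := congrArg (fun p => p x) hcτ.symm
            simpa [Equiv.Perm.mul_apply] using this
          rw [hcτx]
          exact fun e2 => hx (τ.injective e2)
        · intro x _
          have := congrArg (fun p => p x) hτ2
          simpa [Equiv.Perm.mul_apply] using this
        · intro x _
          exact flip_ne n x
      exact no_comm_even_cycle hcF hsupeven (conj_eq_imp_comm e)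
end
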